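/- arXiv:2008.13232 — 2 statements merged into one kernel-verified Lean document; each statement's English description precedes it below -/
import Mathlib

section
/- For any composition α = (a,b,c) with three parts, the lattice L(α) of lower order ideals of the fence F(a,b,c) admits a chain decomposition that is symmetric if a = c, top centered if a < c, and bottom centered if a > c. Consequently its rank sequence is symmetric, top interlacing, or bottom interlacing, respectively. -/
open Polynomial

/-- The order relation of the fence poset `F(α)` on positions `0,…,α.sum`
(position `p` corresponds to the element `x_{p+1}`).  Segment `j` (0-indexed)
occupies positions `(α.take j).sum` through `(α.take (j+1)).sum`; even-indexed
segments are ascending and odd-indexed segments are descending. -/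
def fenceLe (α : List ℕ) (p q : ℕ) : Prop :=
  p = q ∨ ∃ j < α.length,
    if j % 2 = 0 then
      (α.take j).sum ≤ p ∧ p ≤ q ∧ q ≤ (α.take (j + 1)).sum
    else
      (α.take j).sum ≤ q ∧ q ≤ p ∧ p ≤ (α.take (j + 1)).sum

/-- `I` is a lower order ideal of the fence `F(α)`. -/
def IsFenceIdeal (α : List ℕ) (I : Finset (Fin (α.sum + 1))) : Prop :=
  ∀ p q : Fin (α.sum + 1), fenceLe α p q → q ∈ I → p ∈ I

/-- The number of lower order ideals of `F(α)` of cardinality `k`,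
i.e. the size of the `k`-th rank of the distributive lattice `L(α)`. -/
noncomputable def fenceRk (α : List ℕ) (k : ℕ) : ℕ :=
  Nat.card {I : Finset (Fin (α.sum + 1)) // IsFenceIdeal α I ∧ I.card = k}

/-- The rank generating function `r(q;α)` of `L(α)`. -/
noncomputable def rpoly (α : List ℕ) : Polynomial ℕ :=
  ∑ k ∈ Finset.range (α.sum + 2), Polynomial.C (fenceRk α k) * Polynomial.X ^ k

/-- `C` is a saturated chain in the poset `P`: it is nonempty, totally ordered,
and consecutive elements of `C` are covering pairs of `P`. -/
def IsSaturatedChain {P : Type*} [PartialOrder P] (C : Finset P) : Prop :=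
  C.Nonempty ∧ (∀ x ∈ C, ∀ y ∈ C, x ≤ y ∨ y ≤ x) ∧
    ∀ x ∈ C, ∀ y ∈ C, x < y → (∀ z ∈ C, ¬(x < z ∧ z < y)) → x ⋖ y

/-- `x` and `y` are the bottom and top elements of the chain `C`. -/
def ChainEnds {P : Type*} [PartialOrder P] (C : Finset P) (x y : P) : Prop :=
  x ∈ C ∧ y ∈ C ∧ (∀ z ∈ C, x ≤ z) ∧ ∀ z ∈ C, z ≤ y

/-- `𝒞` is a chain decomposition of `P`: a partition of `P` into saturated chains. -/
def IsChainDecomp {P : Type*} [PartialOrder P] (𝒞 : Finset (Finset P)) : Prop :=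
  (∀ C ∈ 𝒞, IsSaturatedChain C) ∧
  (∀ C ∈ 𝒞, ∀ D ∈ 𝒞, C ≠ D → Disjoint C D) ∧
  ∀ x : P, ∃ C ∈ 𝒞, x ∈ C

/-- The sequence `a₀,…,a_n` is top interlacing:
`a₀ ≤ a_n ≤ a₁ ≤ a_{n-1} ≤ … ≤ a_{⌈n/2⌉}`. -/
def TopInterlacing (r : ℕ → ℕ) (n : ℕ) : Prop :=
  (∀ i, 2 * i < n → r i ≤ r (n - i)) ∧ ∀ i, 2 * i + 1 < n → r (n - i) ≤ r (i + 1)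

/-- The sequence `a₀,…,a_n` is bottom interlacing:
`a_n ≤ a₀ ≤ a_{n-1} ≤ a₁ ≤ … ≤ a_{⌊n/2⌋}`. -/
def BottomInterlacing (r : ℕ → ℕ) (n : ℕ) : Prop :=
  (∀ i, 2 * i < n → r (n - i) ≤ r i) ∧ ∀ i, 2 * i + 1 < n → r i ≤ r (n - 1 - i)


namespace Fence3

def hookX (s B q : ℕ) : ℕ := if q ≤ B - s then s else s + (q - (B - s))
def hookY (s B q : ℕ) : ℕ := if q ≤ B - s then q else B - s
def hookS (B x y : ℕ) : ℕ := if x + y ≤ B then x else B - y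
def phiU (t c p : ℕ) : ℕ := if p ≤ c - t then t else t + (p - (c - t))
def phiW (t c p : ℕ) : ℕ := if p ≤ c - t then p else c - t
def tOf (c u w : ℕ) : ℕ := if u + w ≤ c then u else c - w

def Valid (a b c : ℕ) (x : ℕ × ℕ × ℕ) : Prop :=
  x.1 ≤ a + 1 ∧ x.2.1 ≤ b ∧ x.2.2 ≤ c ∧ (x.1 = a + 1 → x.2.1 = b) ∧
    (1 ≤ x.2.2 → 1 ≤ x.2.1)

instance (a b c : ℕ) : DecidablePred (Valid a b c) := fun x => by
  unfold Valid; infer_instance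

def tsum (x : ℕ × ℕ × ℕ) : ℕ := x.1 + x.2.1 + x.2.2

def V (a b c k : ℕ) : Finset (ℕ × ℕ × ℕ) :=
  (Finset.range (a + 2) ×ˢ Finset.range (b + 1) ×ˢ Finset.range (c + 1)).filter
    (fun x => Valid a b c x ∧ tsum x = k)

def goodIdx (a b c : ℕ) (cs : ℕ × ℕ) : Prop :=
  (cs.1 = min a c + 1 ∧ cs.2 = 0) ∨
  (cs.1 < min a c ∧ cs.2 ≤ min (a + c - 2 * cs.1) (b - 1)) ∨
  (cs.1 = min a c ∧ 1 ≤ max a c - min a c ∧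
    cs.2 ≤ min (max a c - min a c - 1) (b - 1))

instance (a b c : ℕ) : DecidablePred (goodIdx a b c) := fun cs => by
  unfold goodIdx; infer_instance

def ι (a b c : ℕ) : Finset (ℕ × ℕ) :=
  (Finset.range (min a c + 2) ×ˢ Finset.range (b + 1)).filter (goodIdx a b c)

def lo (a b c : ℕ) (cs : ℕ × ℕ) : ℕ :=
  if cs.1 = min a c + 1 then 0
  else if cs.1 < min a c then cs.1 + cs.2 + 1
  else min a c + (if a ≤ c then 1 else 0) + cs.2 + 1

def hi (a b c : ℕ) (cs : ℕ × ℕ) : ℕ :=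
  if cs.1 = min a c + 1 then a + b + c + 1
  else if cs.1 < min a c then (a + b + c + 1) - (cs.1 + cs.2 + 1)
  else (if a ≤ c then a + b + c + 2 else a + b + c) -
    (min a c + (if a ≤ c then 1 else 0) + cs.2 + 1)

def elemU (a b c : ℕ) (cs : ℕ × ℕ) (k : ℕ) : ℕ :=
  if cs.1 = min a c + 1 then (if k ≤ a then k else if k ≤ a + b then a else a + 1)
  else if cs.1 < min a c then phiU cs.1 c (hookX cs.2 (b - 1) (k - (cs.1 + cs.2 + 1)))
  else if a ≤ c then a
  else c + hookX cs.2 (b - 1) (k - (min a c + cs.2 + 1))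

def elemV (a b c : ℕ) (cs : ℕ × ℕ) (k : ℕ) : ℕ :=
  if cs.1 = min a c + 1 then (if k ≤ a then 0 else if k ≤ a + b then k - a else b)
  else if cs.1 < min a c then hookY cs.2 (b - 1) (k - (cs.1 + cs.2 + 1)) + 1
  else if a ≤ c then hookY cs.2 (b - 1) (k - (min a c + cs.2 + 2)) + 1
  else hookY cs.2 (b - 1) (k - (min a c + cs.2 + 1)) + 1

def elemW (a b c : ℕ) (cs : ℕ × ℕ) (k : ℕ) : ℕ :=
  if cs.1 = min a c + 1 then (if k ≤ a then 0 else if k ≤ a + b then 0 else k - (a + b + 1))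
  else if cs.1 < min a c then phiW cs.1 c (hookX cs.2 (b - 1) (k - (cs.1 + cs.2 + 1)))
  else if a ≤ c then hookX cs.2 (b - 1) (k - (min a c + cs.2 + 2)) + 1
  else 0

def elem (a b c : ℕ) (cs : ℕ × ℕ) (k : ℕ) : ℕ × ℕ × ℕ :=
  (elemU a b c cs k, elemV a b c cs k, elemW a b c cs k)

def spineP (a : ℕ) (x : ℕ × ℕ × ℕ) : Prop :=
  x.2.1 = 0 ∨ x.1 = a + 1 ∨ (x.1 = a ∧ x.2.2 = 0)

instance (a : ℕ) (x : ℕ × ℕ × ℕ) : Decidable (spineP a x) := by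
  unfold spineP; infer_instance

def chainT (a b c : ℕ) (x : ℕ × ℕ × ℕ) : ℕ :=
  if spineP a x then min a c + 1
  else if tOf c x.1 x.2.2 < min a c then tOf c x.1 x.2.2
  else min a c

def chainS (a b c : ℕ) (x : ℕ × ℕ × ℕ) : ℕ :=
  if spineP a x then 0
  else if tOf c x.1 x.2.2 < min a c then
    hookS (b - 1) (x.1 + x.2.2 - tOf c x.1 x.2.2) (x.2.1 - 1)
  else if a ≤ c then hookS (b - 1) (x.2.2 - 1) (x.2.1 - 1)
  else hookS (b - 1) (x.1 - c) (x.2.1 - 1)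

def chainOf (a b c : ℕ) (x : ℕ × ℕ × ℕ) : ℕ × ℕ := (chainT a b c x, chainS a b c x)

section HookLemmas

lemma hookXY_sum (s B q : ℕ) : hookX s B q + hookY s B q = s + q := by
  unfold hookX hookY; split_ifs <;> omega

lemma hookX_ge (s B q : ℕ) : s ≤ hookX s B q := by unfold hookX; split_ifs <;> omega

lemma hookY_le (s B q : ℕ) (h : s ≤ B) : hookY s B q ≤ B := by
  unfold hookY; split_ifs <;> omega

lemma hookX_le (s B q A : ℕ) (hq : q + 2 * s ≤ A + B) (hsB : s ≤ B) (hsA : s ≤ A) :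
    hookX s B q ≤ A := by unfold hookX; split_ifs <;> omega

lemma hookS_hook (s B q : ℕ) (hsB : s ≤ B) :
    hookS B (hookX s B q) (hookY s B q) = s := by
  unfold hookX hookY hookS; split_ifs <;> omega

lemma hookX_inv (B x y : ℕ) (hy : y ≤ B) :
    hookX (hookS B x y) B (x + y - hookS B x y) = x := by
  unfold hookX hookS; split_ifs <;> omega

lemma hookY_inv (B x y : ℕ) (hy : y ≤ B) :
    hookY (hookS B x y) B (x + y - hookS B x y) = y := by
  unfold hookY hookS; split_ifs <;> omega

lemma hookS_le_x (B x y : ℕ) : hookS B x y ≤ x := by unfold hookS; split_ifs <;> omega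

lemma hookS_le_B (B x y : ℕ) (hy : y ≤ B) : hookS B x y ≤ B := by
  unfold hookS; split_ifs <;> omega

lemma hookS_le_sum (B x y : ℕ) : hookS B x y ≤ x + y := by unfold hookS; split_ifs <;> omega

lemma hookX_mono (s B q : ℕ) : hookX s B q ≤ hookX s B (q + 1) := by
  unfold hookX; split_ifs <;> omega

lemma hookY_mono (s B q : ℕ) : hookY s B q ≤ hookY s B (q + 1) := by
  unfold hookY; split_ifs <;> omega

lemma phiUW_sum (t c p : ℕ) : phiU t c p + phiW t c p = t + p := by
  unfold phiU phiW; split_ifs <;> omega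

lemma phiU_ge (t c p : ℕ) : t ≤ phiU t c p := by unfold phiU; split_ifs <;> omega

lemma phiU_le (t c p a : ℕ) (ht : t ≤ c) (hta : t ≤ a) (hp : p + 2 * t ≤ a + c) :
    phiU t c p ≤ a := by unfold phiU; split_ifs <;> omega

lemma phiW_le (t c p : ℕ) (ht : t ≤ c) : phiW t c p ≤ c - t := by
  unfold phiW; split_ifs <;> omega

lemma tOf_phi (t c p : ℕ) (ht : t ≤ c) : tOf c (phiU t c p) (phiW t c p) = t := by
  unfold tOf phiU phiW; split_ifs <;> omega

lemma phiU_inv (c u w : ℕ) (hw : w ≤ c) :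
    phiU (tOf c u w) c (u + w - tOf c u w) = u := by
  unfold phiU tOf; split_ifs <;> omega

lemma phiW_inv (c u w : ℕ) (hw : w ≤ c) :
    phiW (tOf c u w) c (u + w - tOf c u w) = w := by
  unfold phiW tOf; split_ifs <;> omega

lemma tOf_le_c (c u w : ℕ) : tOf c u w ≤ c := by unfold tOf; split_ifs <;> omega

lemma tOf_le_u (c u w : ℕ) : tOf c u w ≤ u := by unfold tOf; split_ifs <;> omega

lemma phi_not_spine (a c t p : ℕ) (ht : t < min a c) :
    ¬(phiU t c p = a ∧ phiW t c p = 0) := by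
  unfold phiU phiW; split_ifs <;> omega

lemma phiU_mono (t c p p' : ℕ) (h : p ≤ p') : phiU t c p ≤ phiU t c p' := by
  unfold phiU; split_ifs <;> omega

lemma phiW_mono (t c p p' : ℕ) (h : p ≤ p') : phiW t c p ≤ phiW t c p' := by
  unfold phiW; split_ifs <;> omega

end HookLemmas

section Core

variable {a b c : ℕ}

lemma min_le_a : min a c ≤ a := min_le_left _ _
lemma min_le_c : min a c ≤ c := min_le_right _ _

/-- L2, spine case -/
lemma L2_spine (ha : 0 < a) (hb : 0 < b) (hc : 0 < c) (k : ℕ) (hk : k ≤ a + b + c + 1) :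
    Valid a b c (elem a b c (min a c + 1, 0) k) ∧ tsum (elem a b c (min a c + 1, 0) k) = k ∧
      chainT a b c (elem a b c (min a c + 1, 0) k) = min a c + 1 ∧
      chainS a b c (elem a b c (min a c + 1, 0) k) = 0 := by
  have hma : min a c ≤ a := min_le_left _ _
  have hmc : min a c ≤ c := min_le_right _ _
  simp only [elem, elemU, elemV, elemW, if_pos rfl]
  unfold Valid tsum chainT chainS spineP tOf
  simp only []
  split_ifs <;> omega

/-- L2, standard hook case -/
lemma L2_std (ha : 0 < a) (hb : 0 < b) (hc : 0 < c) {t s k : ℕ}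
    (ht : t < min a c) (hs : s ≤ min (a + c - 2 * t) (b - 1))
    (h1 : t + s + 1 ≤ k) (h2 : k ≤ (a + b + c + 1) - (t + s + 1)) :
    Valid a b c (elem a b c (t, s) k) ∧ tsum (elem a b c (t, s) k) = k ∧
      chainT a b c (elem a b c (t, s) k) = t ∧
      chainS a b c (elem a b c (t, s) k) = s := by
  have hma : min a c ≤ a := min_le_left _ _
  have hmc : min a c ≤ c := min_le_right _ _
  have hne : ¬((t, s).1 = min a c + 1) := by simp; omega
  have hlt : (t, s).1 < min a c := ht
  simp only [elem, elemU, elemV, elemW, if_neg hne, if_pos hlt]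
  set B := b - 1 with hB
  set q := k - (t + s + 1) with hq
  set p := hookX s B q with hp
  set y := hookY s B q with hy
  have hsB : s ≤ B := by omega
  have hsA : s ≤ a + c - 2 * t := by omega
  have hxy : p + y = s + q := by rw [hp, hy]; exact hookXY_sum s B q
  have hple : p ≤ a + c - 2 * t := by
    rw [hp]; exact hookX_le s B q _ (by omega) hsB hsA
  have hpge : s ≤ p := hp ▸ hookX_ge s B q
  have hyB : y ≤ B := hy ▸ hookY_le s B q hsB
  have huw : phiU t c p + phiW t c p = t + p := phiUW_sum t c p
  have hu_le : phiU t c p ≤ a := phiU_le t c p a (by omega) (by omega) (by omega)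
  have hu_ge : t ≤ phiU t c p := phiU_ge t c p
  have hw_le : phiW t c p ≤ c - t := phiW_le t c p (by omega)
  have htOf : tOf c (phiU t c p) (phiW t c p) = t := tOf_phi t c p (by omega)
  have hns : ¬(phiU t c p = a ∧ phiW t c p = 0) := phi_not_spine a c t p ht
  have hnsp : ¬ spineP a (phiU t c p, y + 1, phiW t c p) := by
    unfold spineP; simp only []; omega
  refine ⟨by simp only [Valid]; omega, by simp only [tsum]; omega, ?_, ?_⟩
  · unfold chainT
    rw [if_neg hnsp]
    simp only []
    rw [htOf, if_pos ht]
  · unfold chainS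
    rw [if_neg hnsp]
    simp only []
    rw [htOf, if_pos ht]
    have : phiU t c p + phiW t c p - t = p := by omega
    rw [this]
    have hyy : y + 1 - 1 = y := by omega
    rw [hyy, hp, hy, hookS_hook s B q hsB]

/-- L2, special case, a ≤ c -/
lemma L2_spec_le (ha : 0 < a) (hb : 0 < b) (hc : 0 < c) {s k : ℕ} (hac : a ≤ c)
    (hA : 1 ≤ max a c - min a c) (hs : s ≤ min (max a c - min a c - 1) (b - 1))
    (h1 : min a c + 1 + s + 1 ≤ k) (h2 : k ≤ (a + b + c + 2) - (min a c + 1 + s + 1)) :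
    Valid a b c (elem a b c (min a c, s) k) ∧ tsum (elem a b c (min a c, s) k) = k ∧
      chainT a b c (elem a b c (min a c, s) k) = min a c ∧
      chainS a b c (elem a b c (min a c, s) k) = s := by
  have hm : min a c = a := by omega
  have hM : max a c = c := by omega
  have hne : ¬((min a c, s).1 = min a c + 1) := by simp
  have hnlt : ¬((min a c, s).1 < min a c) := by simp
  simp only [elem, elemU, elemV, elemW, if_neg hne, if_neg hnlt, if_pos hac]
  set B := b - 1 with hB
  set q := k - (min a c + s + 2) with hq
  set p := hookX s B q with hp
  set y := hookY s B q with hy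
  have hsB : s ≤ B := by omega
  have hsA : s ≤ max a c - min a c - 1 := by omega
  have hxy : p + y = s + q := by rw [hp, hy]; exact hookXY_sum s B q
  have hple : p ≤ c - a - 1 := by
    rw [hp]; refine hookX_le s B q _ (by omega) hsB (by omega)
  have hpge : s ≤ p := hp ▸ hookX_ge s B q
  have hyB : y ≤ B := hy ▸ hookY_le s B q hsB
  have hnsp : ¬ spineP a (a, y + 1, p + 1) := by unfold spineP; simp only []; omega
  have htOf : tOf c a (p + 1) = a := by unfold tOf; rw [if_pos (by omega)]
  refine ⟨by simp only [Valid]; omega, by simp only [tsum]; omega, ?_, ?_⟩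
  · unfold chainT
    rw [if_neg hnsp]
    simp only []
    rw [htOf, if_neg (by omega), hm]
  · unfold chainS
    rw [if_neg hnsp]
    simp only []
    rw [htOf, if_neg (by omega), if_pos hac]
    have e1 : p + 1 - 1 = p := by omega
    have e2 : y + 1 - 1 = y := by omega
    rw [e1, e2, hp, hy, hookS_hook s B q hsB]

/-- L2, special case, a > c -/
lemma L2_spec_gt (ha : 0 < a) (hb : 0 < b) (hc : 0 < c) {s k : ℕ} (hac : ¬ a ≤ c)
    (hA : 1 ≤ max a c - min a c) (hs : s ≤ min (max a c - min a c - 1) (b - 1))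
    (h1 : min a c + 0 + s + 1 ≤ k) (h2 : k ≤ (a + b + c) - (min a c + 0 + s + 1)) :
    Valid a b c (elem a b c (min a c, s) k) ∧ tsum (elem a b c (min a c, s) k) = k ∧
      chainT a b c (elem a b c (min a c, s) k) = min a c ∧
      chainS a b c (elem a b c (min a c, s) k) = s := by
  have hm : min a c = c := by omega
  have hM : max a c = a := by omega
  have hne : ¬((min a c, s).1 = min a c + 1) := by simp
  have hnlt : ¬((min a c, s).1 < min a c) := by simp
  simp only [elem, elemU, elemV, elemW, if_neg hne, if_neg hnlt, if_neg hac]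
  set B := b - 1 with hB
  set q := k - (min a c + s + 1) with hq
  set p := hookX s B q with hp
  set y := hookY s B q with hy
  have hsB : s ≤ B := by omega
  have hsA : s ≤ max a c - min a c - 1 := by omega
  have hxy : p + y = s + q := by rw [hp, hy]; exact hookXY_sum s B q
  have hple : p ≤ a - c - 1 := by
    rw [hp]; refine hookX_le s B q _ (by omega) hsB (by omega)
  have hpge : s ≤ p := hp ▸ hookX_ge s B q
  have hyB : y ≤ B := hy ▸ hookY_le s B q hsB
  have hnsp : ¬ spineP a (c + p, y + 1, 0) := by unfold spineP; simp only []; omega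
  have htOf : tOf c (c + p) 0 = c := by unfold tOf; split_ifs <;> omega
  refine ⟨by simp only [Valid]; omega, by simp only [tsum]; omega, ?_, ?_⟩
  · unfold chainT
    rw [if_neg hnsp]
    simp only []
    rw [htOf, if_neg (by omega), hm]
  · unfold chainS
    rw [if_neg hnsp]
    simp only []
    rw [htOf, if_neg (by omega), if_neg hac]
    have e1 : c + p - c = p := by omega
    have e2 : y + 1 - 1 = y := by omega
    rw [e1, e2, hp, hy, hookS_hook s B q hsB]

end Core

section L1

variable {a b c : ℕ}

lemma chainOf_eq (x : ℕ × ℕ × ℕ) :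
    chainOf a b c x = (chainT a b c x, chainS a b c x) := rfl

lemma mem_ι_iff (cs : ℕ × ℕ) (hb : 0 < b) :
    cs ∈ ι a b c ↔ goodIdx a b c cs := by
  unfold ι
  simp only [Finset.mem_filter, Finset.mem_product, Finset.mem_range]
  constructor
  · exact fun h => h.2
  · intro h
    refine ⟨⟨?_, ?_⟩, h⟩ <;> rcases h with ⟨h1, h2⟩ | ⟨h1, h2⟩ | ⟨h1, hA, h2⟩ <;> omega

lemma L1main (ha : 0 < a) (hb : 0 < b) (hc : 0 < c) (x : ℕ × ℕ × ℕ)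
    (hV : Valid a b c x) :
    goodIdx a b c (chainOf a b c x) ∧ lo a b c (chainOf a b c x) ≤ tsum x ∧
      tsum x ≤ hi a b c (chainOf a b c x) ∧ elem a b c (chainOf a b c x) (tsum x) = x := by
  obtain ⟨u, v, w⟩ := x
  unfold Valid at hV
  simp only [] at hV
  obtain ⟨hu1, hv1, hw1, hu2, hw2⟩ := hV
  by_cases hsp : spineP a (u, v, w)
  · have hcT : chainT a b c (u, v, w) = min a c + 1 := by unfold chainT; rw [if_pos hsp]
    have hcS : chainS a b c (u, v, w) = 0 := by unfold chainS; rw [if_pos hsp]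
    rw [chainOf_eq, hcT, hcS]
    unfold spineP at hsp; simp only [] at hsp
    have hma : min a c ≤ a := min_le_left _ _
    refine ⟨Or.inl ⟨rfl, rfl⟩, ?_, ?_, ?_⟩
    · unfold lo; rw [if_pos rfl]; omega
    · unfold hi; rw [if_pos rfl]; unfold tsum; simp only []; omega
    · unfold elem elemU elemV elemW tsum
      simp only [if_pos rfl, Prod.mk.injEq]
      split_ifs <;> omega
  · have hspc := hsp
    unfold spineP at hspc; simp only [] at hspc
    set t := tOf c u w with htd
    have hkey : (u + w ≤ c ∧ t = u) ∨ (c < u + w ∧ t = c - w) := by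
      rw [htd]; unfold tOf; split_ifs <;> omega
    have hma : min a c ≤ a := min_le_left _ _
    have hmc : min a c ≤ c := min_le_right _ _
    have htm : t ≤ min a c := by omega
    set B := b - 1 with hBd
    set y := v - 1 with hyd
    have hyB : y ≤ B := by omega
    by_cases hlt : t < min a c
    · -- standard hook chain
      set p := u + w - t with hpd
      set s := hookS B p y with hsd
      have hXinv : hookX s B (p + y - s) = p := by rw [hsd]; exact hookX_inv B p y hyB
      have hYinv : hookY s B (p + y - s) = y := by rw [hsd]; exact hookY_inv B p y hyB
      have hsp' : s ≤ p := by rw [hsd]; exact hookS_le_x B p y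
      have hsB : s ≤ B := by rw [hsd]; exact hookS_le_B B p y hyB
      have hsy : s ≤ p + y := by rw [hsd]; exact hookS_le_sum B p y
      have hpA : p ≤ a + c - 2 * t := by omega
      have hscase : (p + y ≤ B ∧ s = p) ∨ (B < p + y ∧ s = B - y) := by
        rw [hsd]; unfold hookS; split_ifs <;> omega
      have hU : phiU t c p = u := by rw [htd, hpd, htd]; exact phiU_inv c u w hw1
      have hW : phiW t c p = w := by rw [htd, hpd, htd]; exact phiW_inv c u w hw1
      have hcT : chainT a b c (u, v, w) = t := by
        simp only [chainT, if_neg hsp]; rw [← htd, if_pos hlt]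
      have hcS : chainS a b c (u, v, w) = s := by
        simp only [chainS, if_neg hsp]; rw [← htd, if_pos hlt, ← hBd, ← hpd, ← hyd, hsd]
      rw [chainOf_eq, hcT, hcS]
      have htne : ¬(t = min a c + 1) := by omega
      refine ⟨Or.inr (Or.inl ⟨hlt, by omega⟩), ?_, ?_, ?_⟩
      · unfold lo; simp only []; rw [if_neg htne, if_pos hlt]; unfold tsum; simp only []; omega
      · unfold hi; simp only []; rw [if_neg htne, if_pos hlt]; unfold tsum; simp only []; omega
      · unfold elem elemU elemV elemW tsum
        simp only [if_neg htne, if_pos hlt, Prod.mk.injEq]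
        have hq : u + v + w - (t + s + 1) = p + y - s := by omega
        rw [hq, hXinv, hYinv, hU, hW]
        omega
    · have htm' : t = min a c := by omega
      by_cases hac : a ≤ c
      · -- special chains, a ≤ c
        have hm : min a c = a := by omega
        have hcase : u = a ∧ 1 ≤ w ∧ u + w ≤ c := by omega
        set x' := w - 1 with hxd
        set s := hookS B x' y with hsd
        have hXinv : hookX s B (x' + y - s) = x' := by rw [hsd]; exact hookX_inv B x' y hyB
        have hYinv : hookY s B (x' + y - s) = y := by rw [hsd]; exact hookY_inv B x' y hyB
        have hsp' : s ≤ x' := by rw [hsd]; exact hookS_le_x B x' y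
        have hsB : s ≤ B := by rw [hsd]; exact hookS_le_B B x' y hyB
        have hsy : s ≤ x' + y := by rw [hsd]; exact hookS_le_sum B x' y
        have hscase : (x' + y ≤ B ∧ s = x') ∨ (B < x' + y ∧ s = B - y) := by
          rw [hsd]; unfold hookS; split_ifs <;> omega
        have hcT : chainT a b c (u, v, w) = min a c := by
          simp only [chainT, if_neg hsp]; rw [← htd, if_neg hlt]
        have hcS : chainS a b c (u, v, w) = s := by
          simp only [chainS, if_neg hsp]; rw [← htd, if_neg hlt, if_pos hac, ← hBd, ← hxd, ← hyd, hsd]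
        rw [chainOf_eq, hcT, hcS]
        have hMm : max a c - min a c = c - a := by omega
        have hne : ¬(min a c = min a c + 1) := by omega
        have hnlt : ¬(min a c < min a c) := by omega
        refine ⟨Or.inr (Or.inr ⟨rfl, by omega, by omega⟩), ?_, ?_, ?_⟩
        · unfold lo; simp only []; rw [if_neg hne, if_neg hnlt, if_pos hac]
          unfold tsum; simp only []; omega
        · unfold hi; simp only []; rw [if_neg hne, if_neg hnlt, if_pos hac, if_pos hac]
          unfold tsum; simp only []; omega
        · unfold elem elemU elemV elemW tsum
          simp only [if_neg hne, if_neg hnlt, if_pos hac, Prod.mk.injEq]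
          have hq : u + v + w - (min a c + s + 2) = x' + y - s := by omega
          rw [hq, hXinv, hYinv]
          omega
      · -- special chains, a > c
        have hm : min a c = c := by omega
        have hcase : w = 0 ∧ c ≤ u ∧ u + 1 ≤ a := by omega
        set x' := u - c with hxd
        set s := hookS B x' y with hsd
        have hXinv : hookX s B (x' + y - s) = x' := by rw [hsd]; exact hookX_inv B x' y hyB
        have hYinv : hookY s B (x' + y - s) = y := by rw [hsd]; exact hookY_inv B x' y hyB
        have hsp' : s ≤ x' := by rw [hsd]; exact hookS_le_x B x' y
        have hsB : s ≤ B := by rw [hsd]; exact hookS_le_B B x' y hyB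
        have hsy : s ≤ x' + y := by rw [hsd]; exact hookS_le_sum B x' y
        have hscase : (x' + y ≤ B ∧ s = x') ∨ (B < x' + y ∧ s = B - y) := by
          rw [hsd]; unfold hookS; split_ifs <;> omega
        have hcT : chainT a b c (u, v, w) = min a c := by
          simp only [chainT, if_neg hsp]; rw [← htd, if_neg hlt]
        have hcS : chainS a b c (u, v, w) = s := by
          simp only [chainS, if_neg hsp]; rw [← htd, if_neg hlt, if_neg hac, ← hBd, ← hxd, ← hyd, hsd]
        rw [chainOf_eq, hcT, hcS]
        have hMm : max a c - min a c = a - c := by omega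
        have hne : ¬(min a c = min a c + 1) := by omega
        have hnlt : ¬(min a c < min a c) := by omega
        refine ⟨Or.inr (Or.inr ⟨rfl, by omega, by omega⟩), ?_, ?_, ?_⟩
        · unfold lo; simp only []; rw [if_neg hne, if_neg hnlt, if_neg hac]
          unfold tsum; simp only []; omega
        · unfold hi; simp only []; rw [if_neg hne, if_neg hnlt, if_neg hac, if_neg hac]
          unfold tsum; simp only []; omega
        · unfold elem elemU elemV elemW tsum
          simp only [if_neg hne, if_neg hnlt, if_neg hac, Prod.mk.injEq]
          have hq : u + v + w - (min a c + s + 1) = x' + y - s := by omega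
          rw [hq, hXinv, hYinv]
          omega

end L1

section Aux

variable {a b c : ℕ}

lemma hookX_monotone (s B q q' : ℕ) (h : q ≤ q') : hookX s B q ≤ hookX s B q' := by
  unfold hookX; split_ifs <;> omega

lemma hookY_monotone (s B q q' : ℕ) (h : q ≤ q') : hookY s B q ≤ hookY s B q' := by
  unfold hookY; split_ifs <;> omega

lemma elemU_mono (cs : ℕ × ℕ) (k : ℕ) : elemU a b c cs k ≤ elemU a b c cs (k + 1) := by
  unfold elemU
  split_ifs <;>
    first
      | omega
      | exact phiU_mono _ _ _ _ (hookX_monotone _ _ _ _ (by omega))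
      | exact Nat.add_le_add_left (hookX_monotone _ _ _ _ (by omega)) _

lemma elemV_mono (cs : ℕ × ℕ) (k : ℕ) : elemV a b c cs k ≤ elemV a b c cs (k + 1) := by
  unfold elemV
  split_ifs <;>
    first
      | omega
      | exact Nat.add_le_add_right (hookY_monotone _ _ _ _ (by omega)) 1

lemma elemW_mono (cs : ℕ × ℕ) (k : ℕ) : elemW a b c cs k ≤ elemW a b c cs (k + 1) := by
  unfold elemW
  split_ifs <;>
    first
      | omega
      | exact phiW_mono _ _ _ _ (hookX_monotone _ _ _ _ (by omega))
      | exact Nat.add_le_add_right (hookX_monotone _ _ _ _ (by omega)) 1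

lemma lo_le_hi (ha : 0 < a) (hb : 0 < b) (hc : 0 < c) {cs : ℕ × ℕ}
    (h : goodIdx a b c cs) : lo a b c cs ≤ hi a b c cs := by
  have hma : min a c ≤ a := min_le_left _ _
  have hmc : min a c ≤ c := min_le_right _ _
  have hM : min a c + (max a c - min a c) = max a c := by omega
  have hM2 : max a c ≤ a + c := by omega
  unfold goodIdx at h
  unfold lo hi
  split_ifs <;> omega

lemma center (ha : 0 < a) (hb : 0 < b) (hc : 0 < c) {cs : ℕ × ℕ}
    (h : goodIdx a b c cs) :
    lo a b c cs + hi a b c cs = a + b + c + 1 ∨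
      (a < c ∧ lo a b c cs + hi a b c cs = a + b + c + 2) ∨
      (c < a ∧ lo a b c cs + hi a b c cs + 1 = a + b + c + 1) := by
  have hma : min a c ≤ a := min_le_left _ _
  have hmc : min a c ≤ c := min_le_right _ _
  have hM : min a c + (max a c - min a c) = max a c := by omega
  have hM2 : max a c ≤ a + c := by omega
  unfold goodIdx at h
  unfold lo hi
  split_ifs <;> omega

lemma L2all (ha : 0 < a) (hb : 0 < b) (hc : 0 < c) {cs : ℕ × ℕ} (h : goodIdx a b c cs)
    {k : ℕ} (h1 : lo a b c cs ≤ k) (h2 : k ≤ hi a b c cs) :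
    Valid a b c (elem a b c cs k) ∧ tsum (elem a b c cs k) = k ∧
      chainOf a b c (elem a b c cs k) = cs := by
  obtain ⟨t, s⟩ := cs
  have hma : min a c ≤ a := min_le_left _ _
  have hmc : min a c ≤ c := min_le_right _ _
  rcases h with ⟨ht, hs⟩ | ⟨ht, hs⟩ | ⟨ht, hA, hs⟩ <;> simp only [] at ht hs
  · subst ht; subst hs
    unfold lo at h1; unfold hi at h2
    rw [if_pos rfl] at h1 h2
    have := L2_spine (a := a) (b := b) (c := c) ha hb hc k h2
    exact ⟨this.1, this.2.1, by rw [chainOf_eq, this.2.2.1, this.2.2.2]⟩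
  · unfold lo at h1; unfold hi at h2
    rw [if_neg (by simp only []; omega), if_pos ht] at h1 h2
    have := L2_std ha hb hc ht hs h1 h2
    exact ⟨this.1, this.2.1, by rw [chainOf_eq, this.2.2.1, this.2.2.2]⟩
  · subst ht
    unfold lo at h1; unfold hi at h2
    rw [if_neg (by simp only []; omega), if_neg (by simp only []; omega)] at h1 h2
    simp only [] at h1 h2
    by_cases hac : a ≤ c
    · rw [if_pos hac] at h1 h2
      rw [if_pos hac] at h2
      have := L2_spec_le ha hb hc (k := k) hac hA hs (by omega) (by omega)
      exact ⟨this.1, this.2.1, by rw [chainOf_eq, this.2.2.1, this.2.2.2]⟩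
    · rw [if_neg hac] at h1 h2
      rw [if_neg hac] at h2
      have := L2_spec_gt ha hb hc (k := k) hac hA hs (by omega) (by omega)
      exact ⟨this.1, this.2.1, by rw [chainOf_eq, this.2.2.1, this.2.2.2]⟩

end Aux

section FinLayer

variable {a b c : ℕ}

lemma sum_abc : ([a, b, c] : List ℕ).sum = a + b + c := by simp; omega

lemma fenceLe_iff (p q : ℕ) :
    fenceLe [a, b, c] p q ↔ p = q ∨ (p ≤ q ∧ q ≤ a) ∨ (a ≤ q ∧ q ≤ p ∧ p ≤ a + b) ∨
      (a + b ≤ p ∧ p ≤ q ∧ q ≤ a + b + c) := by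
  unfold fenceLe
  constructor
  · rintro (rfl | ⟨j, hj, h⟩)
    · exact Or.inl rfl
    · simp only [List.length_cons, List.length_nil] at hj
      interval_cases j <;> simp [List.take] at h <;> omega
  · rintro (rfl | h1 | h2 | h3)
    · exact Or.inl rfl
    · refine Or.inr ⟨0, by norm_num, ?_⟩
      simp [List.take]; omega
    · refine Or.inr ⟨1, by norm_num, ?_⟩
      simp [List.take]; omega
    · refine Or.inr ⟨2, by norm_num, ?_⟩
      simp [List.take]; omega

end FinLayer

section Ideal

variable {a b c : ℕ}

/-- initial-segment lemma for down-closed pieces -/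
lemma seg_down {n : ℕ} (S : Finset (Fin n)) (l len : ℕ)
    (hmem : ∀ p ∈ S, l ≤ p.val ∧ p.val < l + len)
    (hdc : ∀ p q : Fin n, l ≤ p.val → p.val ≤ q.val → q ∈ S → p ∈ S) :
    S.card ≤ len ∧
      ∀ p : Fin n, l ≤ p.val → p.val < l + len → (p ∈ S ↔ p.val < l + S.card) := by
  have himg : (S.image Fin.val).card = S.card :=
    Finset.card_image_of_injective _ Fin.val_injective
  constructor
  · have hsub : S.image Fin.val ⊆ Finset.Ico l (l + len) := by
      intro j hj
      simp only [Finset.mem_image] at hj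
      obtain ⟨p, hp, rfl⟩ := hj
      simpa [Finset.mem_Ico] using hmem p hp
    have := Finset.card_le_card hsub
    simpa [himg] using this
  · intro p hl hlen
    constructor
    · intro hp
      have hsub : Finset.Icc l p.val ⊆ S.image Fin.val := by
        intro j hj
        simp only [Finset.mem_Icc] at hj
        have hjn : j < n := lt_of_le_of_lt hj.2 p.isLt
        have : (⟨j, hjn⟩ : Fin n) ∈ S := hdc ⟨j, hjn⟩ p hj.1 hj.2 hp
        exact Finset.mem_image.mpr ⟨_, this, rfl⟩
      have := Finset.card_le_card hsub
      rw [Nat.card_Icc, himg] at this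
      omega
    · intro hcard
      by_contra hp
      have hsub : S.image Fin.val ⊆ Finset.Ico l p.val := by
        intro j hj
        simp only [Finset.mem_image] at hj
        obtain ⟨q, hq, rfl⟩ := hj
        have h1 := (hmem q hq).1
        have : q.val < p.val := by
          by_contra hge
          exact hp (hdc p q hl (by omega) hq)
        simp [Finset.mem_Ico]; omega
      have := Finset.card_le_card hsub
      rw [Nat.card_Ico, himg] at this
      omega

/-- final-segment lemma for up-closed pieces -/
lemma seg_up {n : ℕ} (S : Finset (Fin n)) (l len : ℕ) (hbound : l + len ≤ n)
    (hmem : ∀ p ∈ S, l ≤ p.val ∧ p.val < l + len)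
    (hdc : ∀ p q : Fin n, q.val ≤ p.val → p.val < l + len → q ∈ S → p ∈ S) :
    S.card ≤ len ∧
      ∀ p : Fin n, l ≤ p.val → p.val < l + len →
        (p ∈ S ↔ l + len < p.val + S.card + 1) := by
  have himg : (S.image Fin.val).card = S.card :=
    Finset.card_image_of_injective _ Fin.val_injective
  constructor
  · have hsub : S.image Fin.val ⊆ Finset.Ico l (l + len) := by
      intro j hj
      simp only [Finset.mem_image] at hj
      obtain ⟨p, hp, rfl⟩ := hj
      simpa [Finset.mem_Ico] using hmem p hp
    have := Finset.card_le_card hsub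
    simpa [himg] using this
  · intro p hl hlen
    constructor
    · intro hp
      have hsub : Finset.Ico p.val (l + len) ⊆ S.image Fin.val := by
        intro j hj
        simp only [Finset.mem_Ico] at hj
        have hjn : j < n := by omega
        exact Finset.mem_image.mpr ⟨⟨j, hjn⟩, hdc ⟨j, hjn⟩ p hj.1 hj.2 hp, rfl⟩
      have := Finset.card_le_card hsub
      rw [Nat.card_Ico, himg] at this
      omega
    · intro hcard
      by_contra hp
      have hsub : S.image Fin.val ⊆ Finset.Ico (p.val + 1) (l + len) := by
        intro j hj
        simp only [Finset.mem_image] at hj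
        obtain ⟨q, hq, rfl⟩ := hj
        have h1 := hmem q hq
        have : p.val < q.val := by
          by_contra hge
          exact hp (hdc p q (by omega) hlen hq)
        simp [Finset.mem_Ico]; omega
      have := Finset.card_le_card hsub
      rw [Nat.card_Ico, himg] at this
      omega

end Ideal

section Ideal2

variable {a b c : ℕ}

def idealFinset (a b c : ℕ) (x : ℕ × ℕ × ℕ) :
    Finset (Fin (([a, b, c] : List ℕ).sum + 1)) :=
  Finset.univ.filter (fun p => p.val < x.1 ∨
    (a + b < p.val + x.2.1 ∧ p.val ≤ a + b) ∨
    (a + b < p.val ∧ p.val < a + b + 1 + x.2.2))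

lemma mem_idealFinset (x : ℕ × ℕ × ℕ) (p : Fin (([a, b, c] : List ℕ).sum + 1)) :
    p ∈ idealFinset a b c x ↔ p.val < x.1 ∨
      (a + b < p.val + x.2.1 ∧ p.val ≤ a + b) ∨
      (a + b < p.val ∧ p.val < a + b + 1 + x.2.2) := by
  unfold idealFinset; rw [Finset.mem_filter]; simp only [Finset.mem_univ, true_and]

def tripleOf (a b c : ℕ) (I : Finset (Fin (([a, b, c] : List ℕ).sum + 1))) : ℕ × ℕ × ℕ :=
  ((I.filter (fun p => p.val ≤ a)).card,
   (I.filter (fun p => a < p.val ∧ p.val ≤ a + b)).card,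
   (I.filter (fun p => a + b < p.val)).card)

lemma idealFinset_isIdeal (ha : 0 < a) (hb : 0 < b) (hc : 0 < c) {x : ℕ × ℕ × ℕ}
    (hx : Valid a b c x) : IsFenceIdeal [a, b, c] (idealFinset a b c x) := by
  obtain ⟨u, v, w⟩ := x
  obtain ⟨hx1, hx2, hx3, hx4, hx5⟩ := hx
  simp only [] at hx1 hx2 hx3 hx4 hx5
  intro p q hle hq
  rw [fenceLe_iff] at hle
  rw [mem_idealFinset] at hq ⊢
  have hs : ([a, b, c] : List ℕ).sum = a + b + c := sum_abc
  have hp' := p.isLt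
  have hq' := q.isLt
  simp only [] at hq ⊢
  omega

lemma card_filter_val_mem {n : ℕ} (s : Finset ℕ) (h : ∀ m ∈ s, m < n) :
    (Finset.univ.filter (fun p : Fin n => p.val ∈ s)).card = s.card := by
  have he : Finset.univ.filter (fun p : Fin n => p.val ∈ s) = s.attachFin h := by
    ext p; simp [Finset.mem_attachFin]
  rw [he, Finset.card_attachFin]

lemma card_idealFinset (ha : 0 < a) (hb : 0 < b) (hc : 0 < c) {x : ℕ × ℕ × ℕ}
    (hx : Valid a b c x) : (idealFinset a b c x).card = tsum x := by
  obtain ⟨u, v, w⟩ := x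
  obtain ⟨hx1, hx2, hx3, hx4, hx5⟩ := hx
  simp only [] at hx1 hx2 hx3 hx4 hx5
  have hs : ([a, b, c] : List ℕ).sum = a + b + c := sum_abc
  have heq : idealFinset a b c (u, v, w) = Finset.univ.filter
      (fun p : Fin (([a, b, c] : List ℕ).sum + 1) =>
        p.val ∈ (Finset.range u ∪ Finset.Ioc (a + b - v) (a + b + w))) := by
    ext p
    rw [mem_idealFinset]
    simp only [Finset.mem_filter, Finset.mem_univ, true_and, Finset.mem_union,
      Finset.mem_range, Finset.mem_Ioc]
    omega
  rw [heq, card_filter_val_mem _ (by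
    intro m hm
    simp only [Finset.mem_union, Finset.mem_range, Finset.mem_Ioc] at hm
    omega)]
  rw [Finset.card_union_of_disjoint (by
    rw [Finset.disjoint_left]
    intro m h1 h2
    simp only [Finset.mem_range] at h1
    simp only [Finset.mem_Ioc] at h2
    omega)]
  rw [Finset.card_range, Nat.card_Ioc]
  unfold tsum
  simp only []
  omega

lemma tripleOf_idealFinset (ha : 0 < a) (hb : 0 < b) (hc : 0 < c) {x : ℕ × ℕ × ℕ}
    (hx : Valid a b c x) : tripleOf a b c (idealFinset a b c x) = x := by
  obtain ⟨u, v, w⟩ := x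
  obtain ⟨hx1, hx2, hx3, hx4, hx5⟩ := hx
  simp only [] at hx1 hx2 hx3 hx4 hx5
  have hs : ([a, b, c] : List ℕ).sum = a + b + c := sum_abc
  unfold tripleOf
  have h1 : (idealFinset a b c (u, v, w)).filter (fun p => p.val ≤ a) =
      Finset.univ.filter (fun p : Fin (([a, b, c] : List ℕ).sum + 1) =>
        p.val ∈ Finset.range u) := by
    ext p
    simp only [Finset.mem_filter, mem_idealFinset, Finset.mem_univ, true_and,
      Finset.mem_range]
    omega
  have h2 : (idealFinset a b c (u, v, w)).filter (fun p => a < p.val ∧ p.val ≤ a + b) =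
      Finset.univ.filter (fun p : Fin (([a, b, c] : List ℕ).sum + 1) =>
        p.val ∈ Finset.Ioc (a + b - v) (a + b)) := by
    ext p
    simp only [Finset.mem_filter, mem_idealFinset, Finset.mem_univ, true_and,
      Finset.mem_Ioc]
    omega
  have h3 : (idealFinset a b c (u, v, w)).filter (fun p => a + b < p.val) =
      Finset.univ.filter (fun p : Fin (([a, b, c] : List ℕ).sum + 1) =>
        p.val ∈ Finset.Ioc (a + b) (a + b + w)) := by
    ext p
    simp only [Finset.mem_filter, mem_idealFinset, Finset.mem_univ, true_and,
      Finset.mem_Ioc]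
    omega
  rw [h1, h2, h3, card_filter_val_mem _ (by intro m hm; simp at hm; omega),
    card_filter_val_mem _ (by intro m hm; simp at hm; omega),
    card_filter_val_mem _ (by intro m hm; simp at hm; omega),
    Finset.card_range, Nat.card_Ioc, Nat.card_Ioc]
  simp only [Prod.mk.injEq]
  exact ⟨trivial, by omega, by omega⟩

lemma ideal_eq (ha : 0 < a) (hb : 0 < b) (hc : 0 < c)
    {I : Finset (Fin (([a, b, c] : List ℕ).sum + 1))} (hI : IsFenceIdeal [a, b, c] I) :
    Valid a b c (tripleOf a b c I) ∧ I = idealFinset a b c (tripleOf a b c I) := by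
  have hs : ([a, b, c] : List ℕ).sum = a + b + c := sum_abc
  have hdim : a + b + c < ([a, b, c] : List ℕ).sum + 1 := by omega
  have hc1 : ∀ p q : Fin (([a, b, c] : List ℕ).sum + 1),
      p.val ≤ q.val → q.val ≤ a → q ∈ I → p ∈ I := fun p q h1 h2 hq =>
    hI p q ((fenceLe_iff _ _).mpr (Or.inr (Or.inl ⟨h1, h2⟩))) hq
  have hc2 : ∀ p q : Fin (([a, b, c] : List ℕ).sum + 1),
      a ≤ q.val → q.val ≤ p.val → p.val ≤ a + b → q ∈ I → p ∈ I := fun p q h1 h2 h3 hq =>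
    hI p q ((fenceLe_iff _ _).mpr (Or.inr (Or.inr (Or.inl ⟨h1, h2, h3⟩)))) hq
  have hc3 : ∀ p q : Fin (([a, b, c] : List ℕ).sum + 1),
      a + b ≤ p.val → p.val ≤ q.val → q ∈ I → p ∈ I := fun p q h1 h2 hq =>
    hI p q ((fenceLe_iff _ _).mpr (Or.inr (Or.inr (Or.inr ⟨h1, h2, by
      have := q.isLt; omega⟩)))) hq
  obtain ⟨h1card, h1iff⟩ := seg_down (I.filter (fun p => p.val ≤ a)) 0 (a + 1)
    (by intro p hp; simp only [Finset.mem_filter] at hp; omega)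
    (by
      intro p q hl hle hq
      simp only [Finset.mem_filter] at hq ⊢
      exact ⟨hc1 p q hle (by omega) hq.1, by omega⟩)
  obtain ⟨h2card, h2iff⟩ := seg_up (I.filter (fun p => a < p.val ∧ p.val ≤ a + b))
    (a + 1) b (by omega)
    (by intro p hp; simp only [Finset.mem_filter] at hp; omega)
    (by
      intro p q hle hlt hq
      simp only [Finset.mem_filter] at hq ⊢
      exact ⟨hc2 p q (by omega) hle (by omega) hq.1, by omega, by omega⟩)
  obtain ⟨h3card, h3iff⟩ := seg_down (I.filter (fun p => a + b < p.val)) (a + b + 1) c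
    (by intro p hp; simp only [Finset.mem_filter] at hp; have := p.isLt; omega)
    (by
      intro p q hl hle hq
      simp only [Finset.mem_filter] at hq ⊢
      exact ⟨hc3 p q (by omega) hle hq.1, by omega⟩)
  set u := (I.filter (fun p => p.val ≤ a)).card with hud
  set v := (I.filter (fun p => a < p.val ∧ p.val ≤ a + b)).card with hvd
  set w := (I.filter (fun p => a + b < p.val)).card with hwd
  have hmemI1 : ∀ p : Fin (([a, b, c] : List ℕ).sum + 1), p.val ≤ a →
      (p ∈ I ↔ p.val < u) := by
    intro p hpa
    rw [← (by simp : (0 : ℕ) + u = u)]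
    constructor
    · intro hp
      exact (h1iff p (Nat.zero_le _) (by omega)).mp (Finset.mem_filter.mpr ⟨hp, hpa⟩)
    · intro h
      exact (Finset.mem_filter.mp ((h1iff p (Nat.zero_le _) (by omega)).mpr h)).1
  have hmemI2 : ∀ p : Fin (([a, b, c] : List ℕ).sum + 1), a < p.val → p.val ≤ a + b →
      (p ∈ I ↔ a + b < p.val + v) := by
    intro p h1 h2
    constructor
    · intro hp
      have := (h2iff p (by omega) (by omega)).mp (Finset.mem_filter.mpr ⟨hp, h1, h2⟩)
      omega
    · intro h
      exact (Finset.mem_filter.mp ((h2iff p (by omega) (by omega)).mpr (by omega))).1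
  have hmemI3 : ∀ p : Fin (([a, b, c] : List ℕ).sum + 1), a + b < p.val →
      (p ∈ I ↔ p.val < a + b + 1 + w) := by
    intro p h1
    have hpl := p.isLt
    constructor
    · intro hp
      have := (h3iff p (by omega) (by omega)).mp (Finset.mem_filter.mpr ⟨hp, h1⟩)
      omega
    · intro h
      exact (Finset.mem_filter.mp ((h3iff p (by omega) (by omega)).mpr (by omega))).1
  have hVu : u = a + 1 → v = b := by
    intro hu
    have hain : (⟨a, by omega⟩ : Fin (([a, b, c] : List ℕ).sum + 1)) ∈ I :=
      (hmemI1 ⟨a, by omega⟩ (le_refl a)).mpr (by first | omega | (simp; try omega))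
    have ha1 : (⟨a + 1, by omega⟩ : Fin (([a, b, c] : List ℕ).sum + 1)) ∈ I :=
      hc2 ⟨a + 1, by omega⟩ ⟨a, by omega⟩ (by simp) (by first | omega | (simp; try omega)) (by first | omega | (simp; try omega)) hain
    have := (hmemI2 ⟨a + 1, by omega⟩ (by simp) (by first | omega | (simp; try omega))).mp ha1
    simp at this
    omega
  have hVw : 1 ≤ w → 1 ≤ v := by
    intro hw
    have hin : (⟨a + b + 1, by omega⟩ : Fin (([a, b, c] : List ℕ).sum + 1)) ∈ I :=
      (hmemI3 ⟨a + b + 1, by omega⟩ (by first | omega | (simp; try omega))).mpr (by first | omega | (simp; try omega))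
    have hab : (⟨a + b, by omega⟩ : Fin (([a, b, c] : List ℕ).sum + 1)) ∈ I :=
      hc3 ⟨a + b, by omega⟩ ⟨a + b + 1, by omega⟩ (by simp) (by simp) hin
    have := (hmemI2 ⟨a + b, by omega⟩ (by first | omega | (simp; try omega)) (by simp)).mp hab
    simp at this
    omega
  have htrip : tripleOf a b c I = (u, v, w) := by
    unfold tripleOf; rw [← hud, ← hvd, ← hwd]
  rw [htrip]
  refine ⟨⟨h1card, h2card, h3card, hVu, hVw⟩, ?_⟩
  ext p
  rw [mem_idealFinset]
  simp only []
  by_cases hpa : p.val ≤ a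
  · rw [hmemI1 p hpa]; omega
  · by_cases hpb : p.val ≤ a + b
    · rw [hmemI2 p (by omega) hpb]; omega
    · rw [hmemI3 p (by omega)]; omega

end Ideal2

section Rk

variable {a b c : ℕ}

lemma mem_V_iff {k : ℕ} (x : ℕ × ℕ × ℕ) :
    x ∈ V a b c k ↔ Valid a b c x ∧ tsum x = k := by
  unfold V
  rw [Finset.mem_filter]
  constructor
  · exact fun h => h.2
  · intro h
    refine ⟨?_, h⟩
    obtain ⟨u, v, w⟩ := x
    have h1 : u ≤ a + 1 := h.1.1
    have h2 : v ≤ b := h.1.2.1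
    have h3 : w ≤ c := h.1.2.2.1
    simp only [Finset.mem_product, Finset.mem_range]
    refine ⟨by omega, by omega, by omega⟩

lemma fenceRk_eq_V (ha : 0 < a) (hb : 0 < b) (hc : 0 < c) (k : ℕ) :
    fenceRk [a, b, c] k = (V a b c k).card := by
  have e : {I : Finset (Fin (([a, b, c] : List ℕ).sum + 1)) //
      IsFenceIdeal [a, b, c] I ∧ I.card = k} ≃ {x // x ∈ V a b c k} :=
    { toFun := fun I => ⟨tripleOf a b c I.1, by
        obtain ⟨hV, hEq⟩ := ideal_eq ha hb hc I.2.1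
        rw [mem_V_iff]
        refine ⟨hV, ?_⟩
        calc tsum (tripleOf a b c I.1)
            = (idealFinset a b c (tripleOf a b c I.1)).card :=
              (card_idealFinset ha hb hc hV).symm
          _ = I.1.card := by rw [← hEq]
          _ = k := I.2.2⟩
      invFun := fun x => ⟨idealFinset a b c x.1, by
        have hx := (mem_V_iff x.1).mp x.2
        exact ⟨idealFinset_isIdeal ha hb hc hx.1, by
          rw [card_idealFinset ha hb hc hx.1, hx.2]⟩⟩
      left_inv := fun I => Subtype.ext (ideal_eq ha hb hc I.2.1).2.symm
      right_inv := fun x => Subtype.ext (tripleOf_idealFinset ha hb hc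
        ((mem_V_iff x.1).mp x.2).1) }
  unfold fenceRk
  rw [Nat.card_congr e, Nat.card_eq_finsetCard]

lemma V_card_eq_chains (ha : 0 < a) (hb : 0 < b) (hc : 0 < c) (k : ℕ) :
    (V a b c k).card =
      ((ι a b c).filter (fun cs => lo a b c cs ≤ k ∧ k ≤ hi a b c cs)).card := by
  refine Finset.card_bij (fun x _ => chainOf a b c x) ?_ ?_ ?_
  · intro x hx
    have h := (mem_V_iff x).mp hx
    obtain ⟨hg, hl, hh, _⟩ := L1main ha hb hc x h.1
    rw [Finset.mem_filter]
    refine ⟨(mem_ι_iff _ hb).mpr hg, ?_, ?_⟩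
    · show lo a b c (chainOf a b c x) ≤ k
      rw [← h.2]; exact hl
    · show k ≤ hi a b c (chainOf a b c x)
      rw [← h.2]; exact hh
  · intro x hx y hy hxy
    have hx' := (mem_V_iff x).mp hx
    have hy' := (mem_V_iff y).mp hy
    have ex := (L1main ha hb hc x hx'.1).2.2.2
    have ey := (L1main ha hb hc y hy'.1).2.2.2
    rw [hx'.2] at ex
    rw [hy'.2] at ey
    rw [← ex, ← ey, hxy]
  · intro cs hcs
    rw [Finset.mem_filter] at hcs
    obtain ⟨hmem, h1, h2⟩ := hcs
    have hg := (mem_ι_iff _ hb).mp hmem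
    obtain ⟨hV, ht, hco⟩ := L2all ha hb hc hg h1 h2
    exact ⟨elem a b c cs k, (mem_V_iff _).mpr ⟨hV, ht⟩, hco⟩

lemma fenceRk_eq_chains (ha : 0 < a) (hb : 0 < b) (hc : 0 < c) (k : ℕ) :
    fenceRk [a, b, c] k =
      ((ι a b c).filter (fun cs => lo a b c cs ≤ k ∧ k ≤ hi a b c cs)).card := by
  rw [fenceRk_eq_V ha hb hc, V_card_eq_chains ha hb hc]

/-- counting comparison from chainwise implication -/
lemma chains_le (ha : 0 < a) (hb : 0 < b) (hc : 0 < c) (k k' : ℕ)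
    (h : ∀ cs ∈ ι a b c, lo a b c cs ≤ k ∧ k ≤ hi a b c cs →
      lo a b c cs ≤ k' ∧ k' ≤ hi a b c cs) :
    fenceRk [a, b, c] k ≤ fenceRk [a, b, c] k' := by
  rw [fenceRk_eq_chains ha hb hc, fenceRk_eq_chains ha hb hc]
  apply Finset.card_le_card
  intro cs hcs
  rw [Finset.mem_filter] at hcs ⊢
  exact ⟨hcs.1, h cs hcs.1 hcs.2⟩

end Rk

section Main

variable {a b c : ℕ}

lemma idealFinset_mono {x y : ℕ × ℕ × ℕ} (h1 : x.1 ≤ y.1) (h2 : x.2.1 ≤ y.2.1)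
    (h3 : x.2.2 ≤ y.2.2) : idealFinset a b c x ⊆ idealFinset a b c y := by
  intro p hp
  rw [mem_idealFinset] at hp ⊢
  omega

open Classical in
noncomputable def mkIdeal (a b c : ℕ) (x : ℕ × ℕ × ℕ) :
    {I : Finset (Fin (([a, b, c] : List ℕ).sum + 1)) // IsFenceIdeal [a, b, c] I} :=
  if h : IsFenceIdeal [a, b, c] (idealFinset a b c x) then ⟨_, h⟩
  else ⟨∅, fun _ q _ hq => absurd hq (Finset.notMem_empty q)⟩

lemma mkIdeal_val (ha : 0 < a) (hb : 0 < b) (hc : 0 < c) {x : ℕ × ℕ × ℕ}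
    (hx : Valid a b c x) : (mkIdeal a b c x).1 = idealFinset a b c x := by
  unfold mkIdeal
  rw [dif_pos (idealFinset_isIdeal ha hb hc hx)]

noncomputable def chainF (a b c : ℕ) (cs : ℕ × ℕ) (k : ℕ) :
    {I : Finset (Fin (([a, b, c] : List ℕ).sum + 1)) // IsFenceIdeal [a, b, c] I} :=
  mkIdeal a b c (elem a b c cs k)

noncomputable def chainC (a b c : ℕ) (cs : ℕ × ℕ) :
    Finset {I : Finset (Fin (([a, b, c] : List ℕ).sum + 1)) // IsFenceIdeal [a, b, c] I} :=
  (Finset.Icc (lo a b c cs) (hi a b c cs)).image (chainF a b c cs)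

noncomputable def CD (a b c : ℕ) :
    Finset (Finset {I : Finset (Fin (([a, b, c] : List ℕ).sum + 1)) //
      IsFenceIdeal [a, b, c] I}) :=
  (ι a b c).image (chainC a b c)

lemma chainF_val (ha : 0 < a) (hb : 0 < b) (hc : 0 < c) {cs : ℕ × ℕ} (hg : goodIdx a b c cs) {k : ℕ}
    (h1 : lo a b c cs ≤ k) (h2 : k ≤ hi a b c cs) :
    (chainF a b c cs k).1 = idealFinset a b c (elem a b c cs k) :=
  mkIdeal_val ha hb hc (L2all ha hb hc hg h1 h2).1

lemma chainF_card (ha : 0 < a) (hb : 0 < b) (hc : 0 < c) {cs : ℕ × ℕ} (hg : goodIdx a b c cs) {k : ℕ}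
    (h1 : lo a b c cs ≤ k) (h2 : k ≤ hi a b c cs) :
    (chainF a b c cs k).1.card = k := by
  obtain ⟨hV, ht, _⟩ := L2all ha hb hc hg h1 h2
  rw [chainF_val ha hb hc hg h1 h2, card_idealFinset ha hb hc hV, ht]

lemma chainF_mono (ha : 0 < a) (hb : 0 < b) (hc : 0 < c) {cs : ℕ × ℕ} (hg : goodIdx a b c cs) {k k' : ℕ}
    (h1 : lo a b c cs ≤ k) (hkk : k ≤ k') (h2 : k' ≤ hi a b c cs) :
    (chainF a b c cs k).1 ⊆ (chainF a b c cs k').1 := by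
  induction k', hkk using Nat.le_induction with
  | base => exact subset_rfl
  | succ m hm ih =>
    refine subset_trans (ih (by omega)) ?_
    rw [chainF_val ha hb hc hg (by omega) (by omega),
      chainF_val ha hb hc hg (by omega) h2]
    exact idealFinset_mono (elemU_mono cs m) (elemV_mono cs m) (elemW_mono cs m)

lemma mem_chainC {cs : ℕ × ℕ} {z} :
    z ∈ chainC a b c cs ↔ ∃ k, (lo a b c cs ≤ k ∧ k ≤ hi a b c cs) ∧
      chainF a b c cs k = z := by
  unfold chainC
  rw [Finset.mem_image]; simp only [Finset.mem_Icc]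

/-- every element of the subtype lies on its canonical chain -/
lemma cover_aux (ha : 0 < a) (hb : 0 < b) (hc : 0 < c) (x : {I : Finset (Fin (([a, b, c] : List ℕ).sum + 1)) //
    IsFenceIdeal [a, b, c] I}) :
    ∃ cs ∈ ι a b c, ∃ k, (lo a b c cs ≤ k ∧ k ≤ hi a b c cs) ∧
      chainF a b c cs k = x := by
  obtain ⟨hV, hEq⟩ := ideal_eq ha hb hc x.2
  set t := tripleOf a b c x.1 with htd
  obtain ⟨hg, h1, h2, h3⟩ := L1main ha hb hc t hV
  refine ⟨chainOf a b c t, (mem_ι_iff _ hb).mpr hg, tsum t, ⟨h1, h2⟩, ?_⟩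
  apply Subtype.ext
  rw [chainF_val ha hb hc hg h1 h2, h3, ← hEq]

lemma chainF_inj_strong (ha : 0 < a) (hb : 0 < b) (hc : 0 < c) {cs cs' : ℕ × ℕ} (hg : goodIdx a b c cs) (hg' : goodIdx a b c cs')
    {k k' : ℕ} (h1 : lo a b c cs ≤ k) (h2 : k ≤ hi a b c cs)
    (h1' : lo a b c cs' ≤ k') (h2' : k' ≤ hi a b c cs')
    (heq : chainF a b c cs k = chainF a b c cs' k') : cs = cs' ∧ k = k' := by
  obtain ⟨hV, ht, hco⟩ := L2all ha hb hc hg h1 h2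
  obtain ⟨hV', ht', hco'⟩ := L2all ha hb hc hg' h1' h2'
  have hval : idealFinset a b c (elem a b c cs k) = idealFinset a b c (elem a b c cs' k') := by
    rw [← chainF_val ha hb hc hg h1 h2, ← chainF_val ha hb hc hg' h1' h2', heq]
  have helem : elem a b c cs k = elem a b c cs' k' := by
    have := congrArg (tripleOf a b c) hval
    rwa [tripleOf_idealFinset ha hb hc hV, tripleOf_idealFinset ha hb hc hV'] at this
  have hk : k = k' := by rw [← ht, ← ht', helem]
  have : cs = cs' := by rw [← hco, ← hco', helem]
  exact ⟨this, hk⟩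

end Main

section Thm

variable {a b c : ℕ}

lemma sub_card_lt {x z : {I : Finset (Fin (([a, b, c] : List ℕ).sum + 1)) //
    IsFenceIdeal [a, b, c] I}} (h : x < z) : x.1.card < z.1.card := by
  have hle : x.1 ⊆ z.1 := Finset.le_iff_subset.mp (Subtype.coe_le_coe.mpr h.le)
  refine Finset.card_lt_card ⟨hle, fun hsub => h.ne (Subtype.ext ?_)⟩
  exact Finset.Subset.antisymm hle hsub

lemma lt_of_sub_card {x z : {I : Finset (Fin (([a, b, c] : List ℕ).sum + 1)) //
    IsFenceIdeal [a, b, c] I}} (hsub : x.1 ⊆ z.1) (hcard : x.1.card < z.1.card) :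
    x < z := by
  refine lt_of_le_of_ne (Subtype.coe_le_coe.mp (Finset.le_iff_subset.mpr hsub)) ?_
  intro h
  rw [h] at hcard
  omega

lemma CD_isChainDecomp (ha : 0 < a) (hb : 0 < b) (hc : 0 < c) :
    IsChainDecomp (CD a b c) := by
  refine ⟨?_, ?_, ?_⟩
  · -- saturated chains
    intro C hC
    obtain ⟨cs, hcs, rfl⟩ := Finset.mem_image.mp hC
    have hg := (mem_ι_iff cs hb).mp hcs
    have hlh := lo_le_hi ha hb hc hg
    refine ⟨⟨chainF a b c cs (lo a b c cs),
        mem_chainC.mpr ⟨lo a b c cs, ⟨le_refl _, hlh⟩, rfl⟩⟩, ?_, ?_⟩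
    · intro x hx y hy
      obtain ⟨k1, hk1, rfl⟩ := mem_chainC.mp hx
      obtain ⟨k2, hk2, rfl⟩ := mem_chainC.mp hy
      rcases le_total k1 k2 with h | h
      · exact Or.inl (Subtype.coe_le_coe.mp
          (Finset.le_iff_subset.mpr (chainF_mono ha hb hc hg hk1.1 h hk2.2)))
      · exact Or.inr (Subtype.coe_le_coe.mp
          (Finset.le_iff_subset.mpr (chainF_mono ha hb hc hg hk2.1 h hk1.2)))
    · intro x hx y hy hxy hnomid
      obtain ⟨k1, hk1, rfl⟩ := mem_chainC.mp hx
      obtain ⟨k2, hk2, rfl⟩ := mem_chainC.mp hy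
      have cx := chainF_card ha hb hc hg hk1.1 hk1.2
      have cy := chainF_card ha hb hc hg hk2.1 hk2.2
      have hk12 : k1 < k2 := by
        have := sub_card_lt hxy
        omega
      have hk2eq : k2 = k1 + 1 := by
        by_contra hne
        have hmid : chainF a b c cs (k1 + 1) ∈ chainC a b c cs :=
          mem_chainC.mpr ⟨k1 + 1, ⟨by omega, by omega⟩, rfl⟩
        have cz := chainF_card ha hb hc hg (k := k1 + 1) (by omega) (by omega)
        refine hnomid _ hmid ⟨?_, ?_⟩
        · exact lt_of_sub_card (chainF_mono ha hb hc hg hk1.1 (by omega) (by omega))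
            (by omega)
        · exact lt_of_sub_card (chainF_mono ha hb hc hg (by omega) (by omega) hk2.2)
            (by omega)
      refine ⟨hxy, fun z hz1 hz2 => ?_⟩
      have c1 := sub_card_lt hz1
      have c2 := sub_card_lt hz2
      omega
  · -- pairwise disjoint
    intro C hC D hD hne
    obtain ⟨cs, hcs, rfl⟩ := Finset.mem_image.mp hC
    obtain ⟨cs', hcs', rfl⟩ := Finset.mem_image.mp hD
    rw [Finset.disjoint_left]
    intro x hxC hxD
    obtain ⟨k1, hk1, he1⟩ := mem_chainC.mp hxC
    obtain ⟨k2, hk2, he2⟩ := mem_chainC.mp hxD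
    have hg := (mem_ι_iff cs hb).mp hcs
    have hg' := (mem_ι_iff cs' hb).mp hcs'
    have := chainF_inj_strong ha hb hc hg hg' hk1.1 hk1.2 hk2.1 hk2.2
      (by rw [he1, he2])
    exact hne (by rw [this.1])
  · -- covers everything
    intro x
    obtain ⟨cs, hcs, k, hk, he⟩ := cover_aux ha hb hc x
    exact ⟨chainC a b c cs, Finset.mem_image_of_mem _ hcs,
      mem_chainC.mpr ⟨k, hk, he⟩⟩

lemma CD_ends (ha : 0 < a) (hb : 0 < b) (hc : 0 < c)
    {C} {x y : {I : Finset (Fin (([a, b, c] : List ℕ).sum + 1)) //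
      IsFenceIdeal [a, b, c] I}}
    (hC : C ∈ CD a b c) (hE : ChainEnds C x y) :
    ∃ cs ∈ ι a b c, x.1.card = lo a b c cs ∧ y.1.card = hi a b c cs := by
  obtain ⟨cs, hcs, rfl⟩ := Finset.mem_image.mp hC
  have hg := (mem_ι_iff cs hb).mp hcs
  have hlh := lo_le_hi ha hb hc hg
  obtain ⟨hxC, hyC, hmin, hmax⟩ := hE
  refine ⟨cs, hcs, ?_, ?_⟩
  · obtain ⟨k1, hk1, he1⟩ := mem_chainC.mp hxC
    have cx : x.1.card = k1 := by rw [← he1]; exact chainF_card ha hb hc hg hk1.1 hk1.2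
    have hxle := hmin (chainF a b c cs (lo a b c cs))
      (mem_chainC.mpr ⟨lo a b c cs, ⟨le_refl _, hlh⟩, rfl⟩)
    have hsub : x.1 ⊆ (chainF a b c cs (lo a b c cs)).1 :=
      Finset.le_iff_subset.mp (Subtype.coe_le_coe.mpr hxle)
    have := Finset.card_le_card hsub
    rw [chainF_card ha hb hc hg (le_refl _) hlh] at this
    omega
  · obtain ⟨k2, hk2, he2⟩ := mem_chainC.mp hyC
    have cy : y.1.card = k2 := by rw [← he2]; exact chainF_card ha hb hc hg hk2.1 hk2.2
    have hyle := hmax (chainF a b c cs (hi a b c cs))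
      (mem_chainC.mpr ⟨hi a b c cs, ⟨hlh, le_refl _⟩, rfl⟩)
    have hsub : (chainF a b c cs (hi a b c cs)).1 ⊆ y.1 :=
      Finset.le_iff_subset.mp (Subtype.coe_le_coe.mpr hyle)
    have := Finset.card_le_card hsub
    rw [chainF_card ha hb hc hg hlh (le_refl _)] at this
    omega

lemma rk_sym (ha : 0 < a) (hb : 0 < b) (hc : 0 < c) (hac : a = c) :
    ∀ i ≤ a + b + c + 1, fenceRk [a, b, c] i = fenceRk [a, b, c] (a + b + c + 1 - i) := by
  intro i hle
  rw [fenceRk_eq_chains ha hb hc, fenceRk_eq_chains ha hb hc]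
  congr 1
  ext cs
  simp only [Finset.mem_filter]
  constructor <;> rintro ⟨hm, hcond⟩ <;> refine ⟨hm, ?_⟩ <;>
    have hcen := center ha hb hc ((mem_ι_iff cs hb).mp hm) <;> omega

lemma rk_top (ha : 0 < a) (hb : 0 < b) (hc : 0 < c) (hac : a < c) :
    TopInterlacing (fenceRk [a, b, c]) (a + b + c + 1) := by
  constructor
  · intro i hi
    refine chains_le ha hb hc _ _ (fun cs hcs hcond => ?_)
    have hcen := center ha hb hc ((mem_ι_iff cs hb).mp hcs)
    have hlh := lo_le_hi ha hb hc ((mem_ι_iff cs hb).mp hcs)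
    omega
  · intro i hi
    refine chains_le ha hb hc _ _ (fun cs hcs hcond => ?_)
    have hcen := center ha hb hc ((mem_ι_iff cs hb).mp hcs)
    have hlh := lo_le_hi ha hb hc ((mem_ι_iff cs hb).mp hcs)
    omega

lemma rk_bot (ha : 0 < a) (hb : 0 < b) (hc : 0 < c) (hac : c < a) :
    BottomInterlacing (fenceRk [a, b, c]) (a + b + c + 1) := by
  constructor
  · intro i hi
    refine chains_le ha hb hc _ _ (fun cs hcs hcond => ?_)
    have hcen := center ha hb hc ((mem_ι_iff cs hb).mp hcs)
    have hlh := lo_le_hi ha hb hc ((mem_ι_iff cs hb).mp hcs)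
    omega
  · intro i hi
    refine chains_le ha hb hc _ _ (fun cs hcs hcond => ?_)
    have hcen := center ha hb hc ((mem_ι_iff cs hb).mp hcs)
    have hlh := lo_le_hi ha hb hc ((mem_ι_iff cs hb).mp hcs)
    omega

end Thm

end Fence3

/-- For any three-part composition `α = (a,b,c)` the lattice `L(α)` (whose rank
is `n = a+b+c+1`) admits a chain decomposition which is symmetric if `a = c`
(every chain has center `n/2`), top centered if `a < c`, and bottom centered if
`a > c`; consequently the rank sequence of `L(α)` is symmetric, top
interlacing, or bottom interlacing, respectively. -/
theorem fence_three_segments_centered_CD (a b c : ℕ) (ha : 0 < a) (hb : 0 < b)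
    (hc : 0 < c) :
    ∃ 𝒞 : Finset (Finset {I : Finset (Fin (([a, b, c] : List ℕ).sum + 1)) //
        IsFenceIdeal [a, b, c] I}),
      IsChainDecomp 𝒞 ∧
      (∀ C ∈ 𝒞, ∀ x y, ChainEnds C x y →
        if a = c then x.1.card + y.1.card = a + b + c + 1
        else if a < c then
          x.1.card + y.1.card = a + b + c + 1 ∨ x.1.card + y.1.card = a + b + c + 2
        else
          x.1.card + y.1.card = a + b + c + 1 ∨ x.1.card + y.1.card + 1 = a + b + c + 1) ∧
      (if a = c then
        ∀ i ≤ a + b + c + 1, fenceRk [a, b, c] i = fenceRk [a, b, c] (a + b + c + 1 - i)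
      else if a < c then TopInterlacing (fenceRk [a, b, c]) (a + b + c + 1)
      else BottomInterlacing (fenceRk [a, b, c]) (a + b + c + 1)) := by
  refine ⟨Fence3.CD a b c, Fence3.CD_isChainDecomp ha hb hc, ?_, ?_⟩
  · intro C hC x y hE
    obtain ⟨cs, hcs, hx, hy⟩ := Fence3.CD_ends ha hb hc hC hE
    have hcen := Fence3.center ha hb hc ((Fence3.mem_ι_iff cs hb).mp hcs)
    split_ifs with h1 h2 <;> omega
  · split_ifs with h1 h2
    · exact Fence3.rk_sym ha hb hc h1
    · exact Fence3.rk_top ha hb hc h2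
    · exact Fence3.rk_bot ha hb hc (by omega)
end

section
/- Let α = (α₁,…,α_{2u−1}) be a composition with an odd number of parts, and let Z(α) = {z₁,…,z_u} be the set of maximal elements of F(α) from left to right. Then r(q;α) = Σ_{Z ⊆ Z(α)} q^{|Z|} r(Z,1) r(Z,2) ⋯ r(Z,u), where r(Z,1) = q^{α₁} if z₁ ∈ Z and [α₁+1]_q otherwise, and for i > 1: r(Z,i) = q^{α_{2i−2}+α_{2i−1}−1} if z_{i−1}, z_i ∈ Z; q^{α_{2i−2}}[α_{2i−1}]_q if z_{i−1} ∈ Z, z_i ∉ Z; q^{α_{2i−1}}[α_{2i−2}]_q if z_{i−1} ∉ Z, z_i ∈ Z; and 1 + q[α_{2i−2}]_q[α_{2i−1}]_q if z_{i−1}, z_i ∉ Z. -/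
open Polynomial

/-- The `q`-integer `[m]_q = 1 + q + ⋯ + q^{m-1}` (so `[0]_q = 0`). -/
noncomputable def qInt (m : ℕ) : Polynomial ℕ :=
  ∑ i ∈ Finset.range m, Polynomial.X ^ i

namespace Claussen
open Finset

def S (α : List ℕ) (j : ℕ) : ℕ := (α.take j).sum

lemma S_zero (α : List ℕ) : S α 0 = 0 := rfl

lemma S_succ (α : List ℕ) (j : ℕ) : S α (j+1) = S α j + α.getD j 0 := by
  unfold S
  rcases lt_or_ge j α.length with h | h
  · rw [List.take_succ, List.sum_append]
    simp [List.getD_eq_getElem?_getD, h]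
  · rw [List.take_of_length_le h, List.take_of_length_le (by omega), List.getD_eq_default _ _ h]
    simp

lemma S_le (α : List ℕ) {j k : ℕ} (h : j ≤ k) : S α j ≤ S α k := by
  induction k with
  | zero => have : j = 0 := by omega
            subst this; exact le_refl _
  | succ k ih =>
    rcases Nat.eq_or_lt_of_le h with rfl | h'
    · exact le_refl _
    · have := ih (by omega); rw [S_succ]; omega

lemma getD_pos (α : List ℕ) (hpos : ∀ x ∈ α, 0 < x) {j : ℕ} (hj : j < α.length) :
    0 < α.getD j 0 := by
  rw [List.getD_eq_getElem _ _ hj]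
  exact hpos _ (List.getElem_mem hj)

lemma S_lt (α : List ℕ) (hpos : ∀ x ∈ α, 0 < x) {j k : ℕ} (hj : j < α.length) (hjk : j < k) :
    S α j < S α k := by
  have h1 : S α j < S α (j+1) := by
    rw [S_succ]; have := getD_pos α hpos hj; omega
  have h2 : S α (j+1) ≤ S α k := S_le α (by omega)
  omega

lemma S_last (α : List ℕ) : S α α.length = α.sum := by
  unfold S; rw [List.take_length]

lemma S_le_sum (α : List ℕ) (j : ℕ) : S α j ≤ α.sum := by
  rcases le_or_gt j α.length with h | h
  · rw [← S_last]; exact S_le α h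
  · rw [← S_last]; unfold S; rw [List.take_of_length_le (by omega), List.take_length]

/-- cover: every position lies in some segment -/
lemma exists_seg (α : List ℕ) (m : ℕ) (hm : 0 < m) {p : ℕ} (hp : p ≤ S α m) :
    ∃ j, j < m ∧ S α j ≤ p ∧ p ≤ S α (j+1) := by
  induction m with
  | zero => omega
  | succ m ih =>
    by_cases h : p ≤ S α m
    · rcases Nat.eq_zero_or_pos m with rfl | hm0
      · exact ⟨0, by omega, by rw [S_zero]; omega, hp⟩
      · obtain ⟨j, hj1, hj2, hj3⟩ := ih hm0 h
        exact ⟨j, by omega, hj2, hj3⟩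
    · exact ⟨m, by omega, by omega, hp⟩

/-- down-closed chain characterization -/
lemma down_char (T' : Finset ℕ) (L R : ℕ)
    (hT : ∀ p q, L ≤ p → p ≤ q → q ≤ R → q ∈ T' → p ∈ T')
    {p : ℕ} (hL : L ≤ p) (hR : p ≤ R) :
    p ∈ T' ↔ p < L + ((Icc L R).filter (· ∈ T')).card := by
  set F := (Icc L R).filter (· ∈ T') with hF
  set c := F.card with hc
  have hsub : F ⊆ Ico L (L + c) := by
    intro q hq
    rw [hF, mem_filter, mem_Icc] at hq
    have hss : Icc L q ⊆ F := by
      intro r hr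
      rw [mem_Icc] at hr
      rw [hF, mem_filter, mem_Icc]
      exact ⟨⟨hr.1, by omega⟩, hT r q hr.1 hr.2 hq.1.2 hq.2⟩
    have := Finset.card_le_card hss
    rw [Nat.card_Icc] at this
    rw [mem_Ico]
    omega
  have heq : F = Ico L (L + c) := by
    apply Finset.eq_of_subset_of_card_le hsub
    rw [Nat.card_Ico]; omega
  constructor
  · intro hp
    have : p ∈ F := by rw [hF, mem_filter, mem_Icc]; exact ⟨⟨hL, hR⟩, hp⟩
    rw [heq, mem_Ico] at this; omega
  · intro hp
    have : p ∈ F := by rw [heq, mem_Ico]; exact ⟨hL, hp⟩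
    rw [hF, mem_filter] at this; exact this.2

/-- up-closed chain characterization -/
lemma up_char (T' : Finset ℕ) (L R : ℕ) (hLR : L ≤ R)
    (hT : ∀ p q, L ≤ q → q ≤ p → p ≤ R → q ∈ T' → p ∈ T')
    {p : ℕ} (hL : L ≤ p) (hR : p ≤ R) :
    p ∈ T' ↔ R < p + ((Icc L R).filter (· ∈ T')).card := by
  set F := (Icc L R).filter (· ∈ T') with hF
  set c := F.card with hc
  have hcle : c ≤ R + 1 - L := by
    rw [hc, hF]
    calc F.card ≤ (Icc L R).card := Finset.card_filter_le _ _
    _ = R + 1 - L := Nat.card_Icc L R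
  have hsub : F ⊆ Icc (R + 1 - c) R := by
    intro q hq
    rw [hF, mem_filter, mem_Icc] at hq
    have hss : Icc q R ⊆ F := by
      intro r hr
      rw [mem_Icc] at hr
      rw [hF, mem_filter, mem_Icc]
      exact ⟨⟨by omega, hr.2⟩, hT r q hq.1.1 hr.1 hr.2 hq.2⟩
    have := Finset.card_le_card hss
    rw [Nat.card_Icc] at this
    rw [mem_Icc]
    omega
  have heq : F = Icc (R + 1 - c) R := by
    apply Finset.eq_of_subset_of_card_le hsub
    rw [Nat.card_Icc]; omega
  constructor
  · intro hp
    have : p ∈ F := by rw [hF, mem_filter, mem_Icc]; exact ⟨⟨hL, hR⟩, hp⟩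
    rw [heq, mem_Icc] at this; omega
  · intro hp
    have : p ∈ F := by rw [heq, mem_Icc]; omega
    rw [hF, mem_filter] at this; exact this.2

/-- telescoping card over blocks -/
lemma card_telescope (t : ℕ → ℕ) (hm : Monotone t) :
    ∀ (m : ℕ) (F : Finset ℕ), (∀ x ∈ F, x ≤ t m) →
    F.card = (F.filter (· ≤ t 0)).card +
      ∑ j ∈ range m, (F.filter (fun p => t j < p ∧ p ≤ t (j+1))).card := by
  intro m
  induction m with
  | zero =>
    intro F hF
    rw [Finset.filter_true_of_mem hF]
    simp
  | succ m ih =>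
    intro F hF
    classical
    have key := Finset.card_filter_add_card_filter_not (s := F) (p := (· ≤ t m))
    set F' := F.filter (· ≤ t m) with hF'
    have h2 : F.filter (fun p => ¬ p ≤ t m) = F.filter (fun p => t m < p ∧ p ≤ t (m+1)) := by
      apply Finset.filter_congr
      intro x hx
      have := hF x hx
      constructor <;> intro h <;> omega
    have h3 := ih F' (by intro x hx; rw [hF', mem_filter] at hx; exact hx.2)
    have h4 : F'.filter (· ≤ t 0) = F.filter (· ≤ t 0) := by
      rw [hF', Finset.filter_filter]
      apply Finset.filter_congr
      intro x hx
      have := hm (Nat.zero_le m)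
      constructor <;> intro h
      · exact h.2
      · exact ⟨by omega, h⟩
    have h5 : ∀ j ∈ range m, F'.filter (fun p => t j < p ∧ p ≤ t (j+1)) =
        F.filter (fun p => t j < p ∧ p ≤ t (j+1)) := by
      intro j hj
      rw [mem_range] at hj
      rw [hF', Finset.filter_filter]
      apply Finset.filter_congr
      intro x hx
      have := hm (show j + 1 ≤ m by omega)
      constructor <;> intro h
      · exact h.2
      · exact ⟨by omega, h⟩
    have h5' : ∑ j ∈ range m, (F'.filter (fun p => t j < p ∧ p ≤ t (j+1))).card =
        ∑ j ∈ range m, (F.filter (fun p => t j < p ∧ p ≤ t (j+1))).card :=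
      Finset.sum_congr rfl (fun j hj => by rw [h5 j hj])
    rw [Finset.sum_range_succ, ← h2, ← key, h3, h4, h5']
    omega

lemma sum_pair (f : ℕ → ℕ) (m : ℕ) :
    ∑ j ∈ range (2*m+1), f j = f 0 + ∑ i ∈ range m, (f (2*i+1) + f (2*i+2)) := by
  induction m with
  | zero => simp
  | succ m ih =>
    have h : 2*(m+1)+1 = (2*m+1) + 1 + 1 := by omega
    rw [h, Finset.sum_range_succ, Finset.sum_range_succ, ih, Finset.sum_range_succ]
    have h1 : 2*m+1+1 = 2*m+2 := by omega
    have h2 : 2*m+1+1+1-1 = 2*m+2 := by omega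
    rw [h1]
    omega

/-! ### Parameter spaces -/

def T (α : List ℕ) (Z : Finset ℕ) (i : ℕ) : Finset (ℕ × ℕ) :=
  if i = 0 then
    (if 0 ∈ Z then {(α.getD 0 0 + 1, 0)} else (range (α.getD 0 0 + 1)) ×ˢ {0})
  else if i - 1 ∈ Z then
    (if i ∈ Z then {(α.getD (2*i) 0 + 1, α.getD (2*i-1) 0 + 1)}
     else (Icc 1 (α.getD (2*i) 0)) ×ˢ {α.getD (2*i-1) 0 + 1})
  else if i ∈ Z then
    ({α.getD (2*i) 0 + 1} : Finset ℕ) ×ˢ (Icc 1 (α.getD (2*i-1) 0))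
  else insert ((0:ℕ),(0:ℕ)) ((Icc 1 (α.getD (2*i) 0)) ×ˢ (Icc 1 (α.getD (2*i-1) 0)))

def w (Z : Finset ℕ) (i : ℕ) (p : ℕ × ℕ) : ℕ :=
  if i = 0 then p.1 - (if 0 ∈ Z then 1 else 0)
  else p.1 + p.2 -
    ((if 0 < p.1 then 1 else 0) + (if i - 1 ∈ Z then 1 else 0) + (if i ∈ Z then 1 else 0))

lemma T_facts {α : List ℕ} {Z : Finset ℕ} {i : ℕ} {p : ℕ × ℕ} (hp : p ∈ T α Z i) :
    p.1 ≤ α.getD (2*i) 0 + 1 ∧ (p.1 = α.getD (2*i) 0 + 1 ↔ i ∈ Z) ∧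
    (i ≠ 0 → (p.2 ≤ α.getD (2*i-1) 0 + 1 ∧ (p.2 = α.getD (2*i-1) 0 + 1 ↔ i - 1 ∈ Z) ∧
      (p.1 = 0 ↔ p.2 = 0))) ∧
    (i = 0 → p.2 = 0) := by
  unfold T at hp
  split_ifs at hp with h0 h1 h2 h3 <;>
    simp only [Finset.mem_product, Finset.mem_insert, Finset.mem_Icc, Finset.mem_range,
      Finset.mem_singleton, Prod.ext_iff] at hp <;>
    subst_eqs <;>
    simp_all <;>
    omega

/-! ### The candidate ideal attached to parameters -/

def memP (α : List ℕ) (u : ℕ) (g : Fin u → ℕ × ℕ) (p : ℕ) : Prop :=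
  ∃ i : Fin u, (S α (2*(i:ℕ)) ≤ p ∧ p < S α (2*(i:ℕ)) + (g i).1) ∨
    (S α (2*(i:ℕ)) < p + (g i).2 ∧ p ≤ S α (2*(i:ℕ)))

noncomputable def idealOf (α : List ℕ) (u : ℕ) (g : Fin u → ℕ × ℕ) : Finset ℕ :=
  @Finset.filter _ (memP α u g) (Classical.decPred _) (range (α.sum+1))

lemma mem_idealOf {α : List ℕ} {u : ℕ} {g : Fin u → ℕ × ℕ} {p : ℕ} :
    p ∈ idealOf α u g ↔ p ≤ α.sum ∧ memP α u g p := by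
  classical
  unfold idealOf
  rw [Finset.mem_filter, Finset.mem_range]
  constructor
  · rintro ⟨h1, h2⟩; exact ⟨by omega, h2⟩
  · rintro ⟨h1, h2⟩; exact ⟨by omega, h2⟩

structure Good (α : List ℕ) (u : ℕ) (g : Fin u → ℕ × ℕ) : Prop where
  h1 : ∀ i : Fin u, (g i).1 ≤ α.getD (2*(i:ℕ)) 0 + 1
  h2 : ∀ i : Fin u, (g i).2 ≤ α.getD (2*(i:ℕ)-1) 0 + 1
  h0 : ∀ i : Fin u, (i:ℕ) = 0 → (g i).2 = 0
  h3 : ∀ i : Fin u, 1 ≤ (i:ℕ) → ((g i).1 = 0 ↔ (g i).2 = 0)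
  h4 : ∀ i j : Fin u, (j:ℕ) = (i:ℕ) + 1 →
    ((g i).1 = α.getD (2*(i:ℕ)) 0 + 1 ↔ (g j).2 = α.getD (2*(j:ℕ)-1) 0 + 1)

lemma good_of_T {α : List ℕ} {Z : Finset ℕ} {u : ℕ} {g : Fin u → ℕ × ℕ}
    (hg : ∀ i : Fin u, g i ∈ T α Z (i:ℕ)) : Good α u g where
  h1 i := (T_facts (hg i)).1
  h2 i := by
    rcases Nat.eq_zero_or_pos (i:ℕ) with h | h
    · rw [(T_facts (hg i)).2.2.2 h]; omega
    · exact ((T_facts (hg i)).2.2.1 (by omega)).1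
  h0 i h := (T_facts (hg i)).2.2.2 h
  h3 i h := ((T_facts (hg i)).2.2.1 (by omega)).2.2
  h4 i j h := by
    have f1 := (T_facts (hg i)).2.1
    have f2 := ((T_facts (hg j)).2.2.1 (by omega)).2.1
    rw [f1, f2, h, Nat.add_sub_cancel]

section Char

variable {α : List ℕ} {u : ℕ} {g : Fin u → ℕ × ℕ}

lemma mem_idealOf_asc (hlen : α.length = 2*u-1) (hpos : ∀ x ∈ α, 0 < x) (hg : Good α u g)
    (i : Fin u) {p : ℕ} (hp1 : S α (2*(i:ℕ)) ≤ p) (hp2 : p ≤ S α (2*(i:ℕ)+1)) :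
    p ∈ idealOf α u g ↔ p < S α (2*(i:ℕ)) + (g i).1 := by
  have hmu : (i:ℕ) < u := i.isLt
  have e2 : S α (2*(i:ℕ)+1) = S α (2*(i:ℕ)) + α.getD (2*(i:ℕ)) 0 := S_succ α _
  constructor
  · intro hp
    rw [mem_idealOf] at hp
    obtain ⟨i', hc⟩ := hp.2
    have hku : (i':ℕ) < u := i'.isLt
    have e1 : S α (2*(i':ℕ)+1) = S α (2*(i':ℕ)) + α.getD (2*(i':ℕ)) 0 := S_succ α _
    have hga := hg.h1 i'
    have hgb := hg.h2 i'
    rcases hc with ⟨hA1, hA2⟩ | ⟨hB1, hB2⟩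
    · rcases Nat.lt_trichotomy (i':ℕ) (i:ℕ) with h | h | h
      · exfalso
        have l1 : S α (2*(i':ℕ)+1) < S α (2*(i:ℕ)) := S_lt α hpos (by omega) (by omega)
        omega
      · have hii : i' = i := Fin.ext h
        rw [hii] at hA2
        exact hA2
      · exfalso
        have l1 : S α (2*(i:ℕ)+1) < S α (2*(i':ℕ)) := S_lt α hpos (by omega) (by omega)
        omega
    · by_cases hk0 : (i':ℕ) = 0
      · exfalso
        have hb0 : (g i').2 = 0 := hg.h0 i' hk0
        have hS0 : S α (2*(i':ℕ)) = 0 := by rw [hk0]; exact S_zero α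
        omega
      · have e3 : S α (2*(i':ℕ)) = S α (2*(i':ℕ)-1) + α.getD (2*(i':ℕ)-1) 0 := by
          have := S_succ α (2*(i':ℕ)-1)
          rwa [show 2*(i':ℕ)-1+1 = 2*(i':ℕ) by omega] at this
        rcases Nat.lt_trichotomy (i':ℕ) (i:ℕ) with h | h | h
        · exfalso
          have l1 : S α (2*(i':ℕ)) < S α (2*(i:ℕ)) := S_lt α hpos (by omega) (by omega)
          omega
        · have hii : i' = i := Fin.ext h
          rw [hii] at hB1 hB2
          have h3 := hg.h3 i (by omega)
          omega
        · by_cases hk1 : (i':ℕ) = (i:ℕ)+1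
          · have e4 : S α (2*(i':ℕ)-1) = S α (2*(i:ℕ)+1) := by
              congr 1; omega
            have hbfull : (g i').2 = α.getD (2*(i':ℕ)-1) 0 + 1 := by omega
            have hafull := (hg.h4 i i' (by omega)).mpr hbfull
            omega
          · exfalso
            have l1 : S α (2*(i:ℕ)+1) < S α (2*(i':ℕ)-1) := S_lt α hpos (by omega) (by omega)
            omega
  · intro hlt
    rw [mem_idealOf]
    have hend : S α (2*(i:ℕ)+1) ≤ α.sum := S_le_sum α _
    exact ⟨by omega, ⟨i, Or.inl ⟨hp1, hlt⟩⟩⟩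

lemma mem_idealOf_desc (hlen : α.length = 2*u-1) (hpos : ∀ x ∈ α, 0 < x) (hg : Good α u g)
    (i : Fin u) (hi : 1 ≤ (i:ℕ)) {p : ℕ}
    (hp1 : S α (2*(i:ℕ)-1) ≤ p) (hp2 : p ≤ S α (2*(i:ℕ))) :
    p ∈ idealOf α u g ↔ S α (2*(i:ℕ)) < p + (g i).2 := by
  have hmu : (i:ℕ) < u := i.isLt
  have e2 : S α (2*(i:ℕ)) = S α (2*(i:ℕ)-1) + α.getD (2*(i:ℕ)-1) 0 := by
    have := S_succ α (2*(i:ℕ)-1)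
    rwa [show 2*(i:ℕ)-1+1 = 2*(i:ℕ) by omega] at this
  have hgbi := hg.h2 i
  constructor
  · intro hp
    rw [mem_idealOf] at hp
    obtain ⟨i', hc⟩ := hp.2
    have hku : (i':ℕ) < u := i'.isLt
    have e1 : S α (2*(i':ℕ)+1) = S α (2*(i':ℕ)) + α.getD (2*(i':ℕ)) 0 := S_succ α _
    have hga := hg.h1 i'
    have hgb := hg.h2 i'
    rcases hc with ⟨hA1, hA2⟩ | ⟨hB1, hB2⟩
    · by_cases hk1 : (i':ℕ) = (i:ℕ) - 1
      · have e4 : S α (2*(i':ℕ)+1) = S α (2*(i:ℕ)-1) := by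
          congr 1; omega
        have hafull : (g i').1 = α.getD (2*(i':ℕ)) 0 + 1 := by omega
        have hbfull := (hg.h4 i' i (by omega)).mp hafull
        omega
      · by_cases hk2 : (i':ℕ) = (i:ℕ)
        · have hii : i' = i := Fin.ext hk2
          rw [hii] at hA1 hA2
          have h3 := hg.h3 i (by omega)
          omega
        · rcases Nat.lt_trichotomy (i':ℕ) (i:ℕ) with h | h | h
          · exfalso
            have l1 : S α (2*(i':ℕ)+1) < S α (2*(i:ℕ)-1) := S_lt α hpos (by omega) (by omega)
            omega
          · omega
          · exfalso
            have l1 : S α (2*(i:ℕ)) < S α (2*(i':ℕ)) := S_lt α hpos (by omega) (by omega)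
            omega
    · by_cases hk0 : (i':ℕ) = 0
      · exfalso
        have hb0 : (g i').2 = 0 := hg.h0 i' hk0
        have hS0 : S α (2*(i':ℕ)) = 0 := by rw [hk0]; exact S_zero α
        omega
      · have e3 : S α (2*(i':ℕ)) = S α (2*(i':ℕ)-1) + α.getD (2*(i':ℕ)-1) 0 := by
          have := S_succ α (2*(i':ℕ)-1)
          rwa [show 2*(i':ℕ)-1+1 = 2*(i':ℕ) by omega] at this
        rcases Nat.lt_trichotomy (i':ℕ) (i:ℕ) with h | h | h
        · exfalso
          have l1 : S α (2*(i':ℕ)) < S α (2*(i:ℕ)-1) := S_lt α hpos (by omega) (by omega)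
          omega
        · have hii : i' = i := Fin.ext h
          rw [hii] at hB1
          exact hB1
        · exfalso
          have l1 : S α (2*(i:ℕ)) < S α (2*(i:ℕ)+1) := S_lt α hpos (by omega) (by omega)
          have l2 : S α (2*(i:ℕ)+1) ≤ S α (2*(i':ℕ)-1) := S_le α (by omega)
          omega
  · intro hlt
    rw [mem_idealOf]
    have hend : S α (2*(i:ℕ)) ≤ α.sum := S_le_sum α _
    exact ⟨by omega, ⟨i, Or.inr ⟨hlt, hp2⟩⟩⟩

end Char

section Ideals

variable {α : List ℕ} {u : ℕ} {g : Fin u → ℕ × ℕ}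

/-- primed versions of the characterizations, with bare ℕ indices -/
lemma asc' (hlen : α.length = 2*u-1) (hpos : ∀ x ∈ α, 0 < x) (hg : Good α u g)
    {k : ℕ} (hk : k < u) {p : ℕ} (hp1 : S α (2*k) ≤ p) (hp2 : p ≤ S α (2*k+1)) :
    p ∈ idealOf α u g ↔ p < S α (2*k) + (g ⟨k, hk⟩).1 :=
  mem_idealOf_asc hlen hpos hg ⟨k, hk⟩ hp1 hp2

lemma desc' (hlen : α.length = 2*u-1) (hpos : ∀ x ∈ α, 0 < x) (hg : Good α u g)
    {k : ℕ} (hk : k < u) (hk1 : 1 ≤ k) {p : ℕ}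
    (hp1 : S α (2*k-1) ≤ p) (hp2 : p ≤ S α (2*k)) :
    p ∈ idealOf α u g ↔ S α (2*k) < p + (g ⟨k, hk⟩).2 :=
  mem_idealOf_desc hlen hpos hg ⟨k, hk⟩ hk1 hp1 hp2

lemma idealOf_closed (hlen : α.length = 2*u-1) (hpos : ∀ x ∈ α, 0 < x) (hu : 0 < u)
    (hg : Good α u g) :
    ∀ p q : ℕ, fenceLe α p q → q ∈ idealOf α u g → p ∈ idealOf α u g := by
  rintro p q (rfl | ⟨j, hj, hcond⟩) hq
  · exact hq
  rw [hlen] at hj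
  by_cases hpar : j % 2 = 0
  · rw [if_pos hpar] at hcond
    obtain ⟨h1, h2, h3⟩ := hcond
    have h1' : S α j ≤ p := h1
    have h3' : q ≤ S α (j+1) := h3
    set k := j / 2 with hkdef
    have hk : k < u := by omega
    have hj2 : 2 * k = j := by omega
    rw [← hj2] at h1' h3'
    have e1 : S α (2*k+1) = S α (2*k) + α.getD (2*k) 0 := S_succ α _
    have hga := hg.h1 ⟨k, hk⟩
    have hq' := (asc' hlen hpos hg hk (by omega) (by omega)).mp hq
    exact (asc' hlen hpos hg hk h1' (by omega)).mpr (by omega)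
  · rw [if_neg hpar] at hcond
    obtain ⟨h1, h2, h3⟩ := hcond
    have h1' : S α j ≤ q := h1
    have h3' : p ≤ S α (j+1) := h3
    set k := (j+1) / 2 with hkdef
    have hk : k < u := by omega
    have hk1 : 1 ≤ k := by omega
    have hj2 : 2 * k - 1 = j := by omega
    have hj3 : 2 * k = j + 1 := by omega
    rw [← hj2] at h1'
    rw [← hj3] at h3'
    have hq' := (desc' hlen hpos hg hk hk1 h1' (by omega)).mp hq
    exact (desc' hlen hpos hg hk hk1 (by omega) h3').mpr (by omega)

/-- decomposition data of an arbitrary ideal -/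
noncomputable def aOf (α : List ℕ) (J : Finset ℕ) (i : ℕ) : ℕ :=
  ((Icc (S α (2*i)) (S α (2*i+1))).filter (· ∈ J)).card

noncomputable def bOf (α : List ℕ) (J : Finset ℕ) (i : ℕ) : ℕ :=
  if i = 0 then 0 else ((Icc (S α (2*i-1)) (S α (2*i))).filter (· ∈ J)).card

noncomputable def gOf (α : List ℕ) (u : ℕ) (J : Finset ℕ) : Fin u → ℕ × ℕ :=
  fun i => (aOf α J (i:ℕ), bOf α J (i:ℕ))

noncomputable def ZOf (α : List ℕ) (u : ℕ) (J : Finset ℕ) : Finset ℕ :=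
  (range u).filter (fun i => S α (2*i+1) ∈ J)

variable {J : Finset ℕ}

lemma ideal_asc_char (hlen : α.length = 2*u-1)
    (hJcl : ∀ p q : ℕ, fenceLe α p q → q ∈ J → p ∈ J)
    {k : ℕ} (hk : k < u) {p : ℕ} (hp1 : S α (2*k) ≤ p) (hp2 : p ≤ S α (2*k+1)) :
    p ∈ J ↔ p < S α (2*k) + aOf α J k := by
  apply down_char
  · intro p' q' a1 a2 a3 hq'
    refine hJcl p' q' (Or.inr ⟨2*k, by omega, ?_⟩) hq'
    rw [if_pos (by omega)]
    exact ⟨a1, a2, a3⟩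
  · exact hp1
  · exact hp2

lemma ideal_desc_char (hlen : α.length = 2*u-1)
    (hJcl : ∀ p q : ℕ, fenceLe α p q → q ∈ J → p ∈ J)
    {k : ℕ} (hk : k < u) (hk1 : 1 ≤ k) {p : ℕ}
    (hp1 : S α (2*k-1) ≤ p) (hp2 : p ≤ S α (2*k)) :
    p ∈ J ↔ S α (2*k) < p + bOf α J k := by
  have : bOf α J k = ((Icc (S α (2*k-1)) (S α (2*k))).filter (· ∈ J)).card := by
    unfold bOf; rw [if_neg (by omega)]
  rw [this]
  apply up_char
  · exact S_le α (by omega)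
  · intro p' q' a1 a2 a3 hq'
    refine hJcl p' q' (Or.inr ⟨2*k-1, by omega, ?_⟩) hq'
    rw [if_neg (by omega)]
    refine ⟨a1, a2, ?_⟩
    have : 2*k-1+1 = 2*k := by omega
    rw [this]
    exact a3
  · exact hp1
  · exact hp2

lemma gOf_mem_T (hlen : α.length = 2*u-1)
    (hJcl : ∀ p q : ℕ, fenceLe α p q → q ∈ J → p ∈ J) (i : Fin u) :
    gOf α u J i ∈ T α (ZOf α u J) (i:ℕ) := by
  obtain ⟨k, hk⟩ := i
  show (aOf α J k, bOf α J k) ∈ T α (ZOf α u J) k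
  have e1 : S α (2*k+1) = S α (2*k) + α.getD (2*k) 0 := S_succ α _
  have fa_le : aOf α J k ≤ α.getD (2*k) 0 + 1 := by
    unfold aOf
    calc ((Icc (S α (2*k)) (S α (2*k+1))).filter (· ∈ J)).card
        ≤ (Icc (S α (2*k)) (S α (2*k+1))).card := Finset.card_filter_le _ _
      _ ≤ α.getD (2*k) 0 + 1 := by rw [Nat.card_Icc]; omega
  have fpeak : (S α (2*k+1) ∈ J) ↔ aOf α J k = α.getD (2*k) 0 + 1 := by
    rw [ideal_asc_char hlen hJcl hk (by omega) (le_refl _)]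
    omega
  have fvA : (S α (2*k) ∈ J) ↔ 0 < aOf α J k := by
    rw [ideal_asc_char hlen hJcl hk (le_refl _) (by omega)]
    omega
  have memZ : (k ∈ ZOf α u J) ↔ S α (2*k+1) ∈ J := by
    unfold ZOf
    rw [Finset.mem_filter, Finset.mem_range]
    exact ⟨fun h => h.2, fun h => ⟨hk, h⟩⟩
  by_cases hk0 : k = 0
  · subst hk0
    have hb : bOf α J 0 = 0 := rfl
    simp only [Nat.mul_zero, Nat.zero_add] at e1 fa_le fpeak fvA memZ
    unfold T
    rw [if_pos rfl]
    by_cases hz : 0 ∈ ZOf α u J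
    · rw [if_pos hz]
      simp only [Finset.mem_singleton, Prod.ext_iff]
      exact ⟨fpeak.mp (memZ.mp hz), hb⟩
    · rw [if_neg hz]
      simp only [Finset.mem_product, Finset.mem_range, Finset.mem_singleton]
      have hnp : ¬ (S α 1 ∈ J) := fun h => hz (memZ.mpr h)
      have hne : aOf α J 0 ≠ α.getD 0 0 + 1 := fun h => hnp (fpeak.mpr h)
      exact ⟨by omega, hb⟩
  · have hk1 : 1 ≤ k := by omega
    have e3 : S α (2*k) = S α (2*k-1) + α.getD (2*k-1) 0 := by
      have := S_succ α (2*k-1)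
      rwa [show 2*k-1+1 = 2*k by omega] at this
    have hbk : bOf α J k = ((Icc (S α (2*k-1)) (S α (2*k))).filter (· ∈ J)).card := by
      unfold bOf; rw [if_neg (by omega)]
    have fb_le : bOf α J k ≤ α.getD (2*k-1) 0 + 1 := by
      rw [hbk]
      calc ((Icc (S α (2*k-1)) (S α (2*k))).filter (· ∈ J)).card
          ≤ (Icc (S α (2*k-1)) (S α (2*k))).card := Finset.card_filter_le _ _
        _ ≤ α.getD (2*k-1) 0 + 1 := by rw [Nat.card_Icc]; omega
    have fpeak' : (S α (2*k-1) ∈ J) ↔ bOf α J k = α.getD (2*k-1) 0 + 1 := by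
      rw [ideal_desc_char hlen hJcl hk hk1 (le_refl _) (by omega)]
      omega
    have fvB : (S α (2*k) ∈ J) ↔ 0 < bOf α J k := by
      rw [ideal_desc_char hlen hJcl hk hk1 (by omega) (le_refl _)]
      omega
    have memZ' : (k-1 ∈ ZOf α u J) ↔ S α (2*k-1) ∈ J := by
      unfold ZOf
      rw [Finset.mem_filter, Finset.mem_range]
      rw [show 2*(k-1)+1 = 2*k-1 by omega]
      exact ⟨fun h => h.2, fun h => ⟨by omega, h⟩⟩
    unfold T
    rw [if_neg hk0]
    by_cases hz1 : k - 1 ∈ ZOf α u J <;> by_cases hz2 : k ∈ ZOf α u J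
    · rw [if_pos hz1, if_pos hz2]
      simp only [Finset.mem_singleton, Prod.ext_iff]
      exact ⟨fpeak.mp (memZ.mp hz2), fpeak'.mp (memZ'.mp hz1)⟩
    · rw [if_pos hz1, if_neg hz2]
      simp only [Finset.mem_product, Finset.mem_Icc, Finset.mem_singleton]
      have hbfull : bOf α J k = α.getD (2*k-1) 0 + 1 := fpeak'.mp (memZ'.mp hz1)
      have hv : S α (2*k) ∈ J := fvB.mpr (by omega)
      have ha1 : 0 < aOf α J k := fvA.mp hv
      have ha2 : ¬ (S α (2*k+1) ∈ J) := fun h => hz2 (memZ.mpr h)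
      have hane : aOf α J k ≠ α.getD (2*k) 0 + 1 := fun h => ha2 (fpeak.mpr h)
      refine ⟨⟨by omega, by omega⟩, hbfull⟩
    · rw [if_neg hz1, if_pos hz2]
      simp only [Finset.mem_product, Finset.mem_Icc, Finset.mem_singleton]
      have hafull : aOf α J k = α.getD (2*k) 0 + 1 := fpeak.mp (memZ.mp hz2)
      have hv : S α (2*k) ∈ J := fvA.mpr (by omega)
      have hb1 : 0 < bOf α J k := fvB.mp hv
      have hb2 : ¬ (S α (2*k-1) ∈ J) := fun h => hz1 (memZ'.mpr h)
      have hbne : bOf α J k ≠ α.getD (2*k-1) 0 + 1 := fun h => hb2 (fpeak'.mpr h)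
      refine ⟨hafull, by omega, by omega⟩
    · rw [if_neg hz1, if_neg hz2]
      simp only [Finset.mem_insert, Finset.mem_product, Finset.mem_Icc, Prod.ext_iff]
      have ha2 : ¬ (S α (2*k+1) ∈ J) := fun h => hz2 (memZ.mpr h)
      have hb2 : ¬ (S α (2*k-1) ∈ J) := fun h => hz1 (memZ'.mpr h)
      have hane : aOf α J k ≠ α.getD (2*k) 0 + 1 := fun h => ha2 (fpeak.mpr h)
      have hbne : bOf α J k ≠ α.getD (2*k-1) 0 + 1 := fun h => hb2 (fpeak'.mpr h)
      by_cases hv : S α (2*k) ∈ J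
      · have ha1 : 0 < aOf α J k := fvA.mp hv
        have hb1 : 0 < bOf α J k := fvB.mp hv
        right
        exact ⟨⟨by omega, by omega⟩, by omega, by omega⟩
      · left
        have ha0 : ¬ 0 < aOf α J k := fun h => hv (fvA.mpr h)
        have hb0 : ¬ 0 < bOf α J k := fun h => hv (fvB.mpr h)
        exact ⟨by omega, by omega⟩

lemma aOf_le (α : List ℕ) (J : Finset ℕ) (k : ℕ) :
    aOf α J k ≤ α.getD (2*k) 0 + 1 := by
  have e1 : S α (2*k+1) = S α (2*k) + α.getD (2*k) 0 := S_succ α _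
  unfold aOf
  calc ((Icc (S α (2*k)) (S α (2*k+1))).filter (· ∈ J)).card
      ≤ (Icc (S α (2*k)) (S α (2*k+1))).card := Finset.card_filter_le _ _
    _ ≤ α.getD (2*k) 0 + 1 := by rw [Nat.card_Icc]; omega

lemma bOf_le (α : List ℕ) (J : Finset ℕ) {k : ℕ} (hk1 : 1 ≤ k) :
    bOf α J k ≤ α.getD (2*k-1) 0 + 1 := by
  have e3 : S α (2*k) = S α (2*k-1) + α.getD (2*k-1) 0 := by
    have := S_succ α (2*k-1)
    rwa [show 2*k-1+1 = 2*k by omega] at this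
  unfold bOf
  rw [if_neg (by omega)]
  calc ((Icc (S α (2*k-1)) (S α (2*k))).filter (· ∈ J)).card
      ≤ (Icc (S α (2*k-1)) (S α (2*k))).card := Finset.card_filter_le _ _
    _ ≤ α.getD (2*k-1) 0 + 1 := by rw [Nat.card_Icc]; omega

lemma idealOf_gOf (hlen : α.length = 2*u-1) (hu : 0 < u)
    (hJsub : J ⊆ range (α.sum+1))
    (hJcl : ∀ p q : ℕ, fenceLe α p q → q ∈ J → p ∈ J) :
    idealOf α u (gOf α u J) = J := by
  ext p
  rw [mem_idealOf]
  constructor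
  · rintro ⟨hps, i, hc⟩
    have hk : (i:ℕ) < u := i.isLt
    have hfst : (gOf α u J i).1 = aOf α J (i:ℕ) := rfl
    have hsnd : (gOf α u J i).2 = bOf α J (i:ℕ) := rfl
    rw [hfst, hsnd] at hc
    have e1 : S α (2*(i:ℕ)+1) = S α (2*(i:ℕ)) + α.getD (2*(i:ℕ)) 0 := S_succ α _
    rcases hc with ⟨h1, h2⟩ | ⟨h1, h2⟩
    · have hale := aOf_le α J (i:ℕ)
      exact (ideal_asc_char hlen hJcl hk h1 (by omega)).mpr h2
    · by_cases hk0 : (i:ℕ) = 0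
      · exfalso
        rw [hk0] at h1 h2
        have hb0 : bOf α J 0 = 0 := rfl
        rw [show (2*0 : ℕ) = 0 by omega, S_zero] at h1 h2
        omega
      · have hk1 : 1 ≤ (i:ℕ) := by omega
        have hble := bOf_le α J hk1
        have e3 : S α (2*(i:ℕ)) = S α (2*(i:ℕ)-1) + α.getD (2*(i:ℕ)-1) 0 := by
          have := S_succ α (2*(i:ℕ)-1)
          rwa [show 2*(i:ℕ)-1+1 = 2*(i:ℕ) by omega] at this
        exact (ideal_desc_char hlen hJcl hk hk1 (by omega) h2).mpr h1
  · intro hp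
    have hps : p ≤ α.sum := by
      have := hJsub hp; rw [Finset.mem_range] at this; omega
    have hsum : S α (2*u-1) = α.sum := by rw [← hlen, S_last]
    obtain ⟨j, hj, h1, h2⟩ := exists_seg α (2*u-1) (by omega) (p := p) (by omega)
    refine ⟨hps, ?_⟩
    by_cases hpar : j % 2 = 0
    · have hk' : j/2 < u := by omega
      have r1 : 2*(j/2) = j := by omega
      have h1' : S α (2*(j/2)) ≤ p := by rw [r1]; exact h1
      have h2' : p ≤ S α (2*(j/2)+1) := by rw [r1]; exact h2
      exact ⟨⟨j/2, hk'⟩, Or.inl ⟨h1', (ideal_asc_char hlen hJcl hk' h1' h2').mp hp⟩⟩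
    · have hk' : (j+1)/2 < u := by omega
      have hk1 : 1 ≤ (j+1)/2 := by omega
      have r1 : 2*((j+1)/2)-1 = j := by omega
      have r2 : 2*((j+1)/2) = j+1 := by omega
      have h1' : S α (2*((j+1)/2)-1) ≤ p := by rw [r1]; exact h1
      have h2' : p ≤ S α (2*((j+1)/2)) := by rw [r2]; exact h2
      exact ⟨⟨(j+1)/2, hk'⟩, Or.inr ⟨(ideal_desc_char hlen hJcl hk' hk1 h1' h2').mp hp, h2'⟩⟩

variable {Z : Finset ℕ}

lemma ZOf_idealOf (hlen : α.length = 2*u-1) (hpos : ∀ x ∈ α, 0 < x)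
    (hZ : Z ⊆ range u) (hgT : ∀ i : Fin u, g i ∈ T α Z (i:ℕ)) :
    ZOf α u (idealOf α u g) = Z := by
  have hg : Good α u g := good_of_T hgT
  ext k
  unfold ZOf
  rw [Finset.mem_filter, Finset.mem_range]
  constructor
  · rintro ⟨hk, hpk⟩
    have e1 : S α (2*k+1) = S α (2*k) + α.getD (2*k) 0 := S_succ α _
    have tf := T_facts (show g ⟨k,hk⟩ ∈ T α Z k from hgT ⟨k,hk⟩)
    have hlt := (asc' hlen hpos hg hk (p := S α (2*k+1)) (by omega) (le_refl _)).mp hpk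
    have := tf.1
    exact tf.2.1.mp (by omega)
  · intro hkZ
    have hk : k < u := by have := hZ hkZ; rwa [Finset.mem_range] at this
    have tf := T_facts (show g ⟨k,hk⟩ ∈ T α Z k from hgT ⟨k,hk⟩)
    have ha : (g ⟨k,hk⟩).1 = α.getD (2*k) 0 + 1 := tf.2.1.mpr hkZ
    have e1 : S α (2*k+1) = S α (2*k) + α.getD (2*k) 0 := S_succ α _
    exact ⟨hk, (asc' hlen hpos hg hk (p := S α (2*k+1)) (by omega) (le_refl _)).mpr (by omega)⟩

lemma gOf_idealOf (hlen : α.length = 2*u-1) (hpos : ∀ x ∈ α, 0 < x)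
    (hgT : ∀ i : Fin u, g i ∈ T α Z (i:ℕ)) :
    gOf α u (idealOf α u g) = g := by
  have hg : Good α u g := good_of_T hgT
  funext i
  obtain ⟨k, hk⟩ := i
  have tf := T_facts (show g ⟨k,hk⟩ ∈ T α Z k from hgT ⟨k,hk⟩)
  have e1 : S α (2*k+1) = S α (2*k) + α.getD (2*k) 0 := S_succ α _
  show (aOf α (idealOf α u g) k, bOf α (idealOf α u g) k) = g ⟨k,hk⟩
  have ha : aOf α (idealOf α u g) k = (g ⟨k,hk⟩).1 := by
    unfold aOf
    have heq : (Icc (S α (2*k)) (S α (2*k+1))).filter (· ∈ idealOf α u g)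
        = Ico (S α (2*k)) (S α (2*k) + (g ⟨k,hk⟩).1) := by
      ext q
      rw [Finset.mem_filter, Finset.mem_Icc, Finset.mem_Ico]
      constructor
      · rintro ⟨⟨hq1, hq2⟩, hq3⟩
        exact ⟨hq1, (asc' hlen hpos hg hk hq1 hq2).mp hq3⟩
      · rintro ⟨hq1, hq2⟩
        have hq2' : q ≤ S α (2*k+1) := by have := tf.1; omega
        exact ⟨⟨hq1, hq2'⟩, (asc' hlen hpos hg hk hq1 hq2').mpr hq2⟩
    rw [heq, Nat.card_Ico]
    omega
  have hb : bOf α (idealOf α u g) k = (g ⟨k,hk⟩).2 := by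
    by_cases hk0 : k = 0
    · subst hk0
      have h0 := tf.2.2.2 rfl
      rw [h0]
      rfl
    · have hk1 : 1 ≤ k := by omega
      have tb := tf.2.2.1 hk0
      have e3 : S α (2*k) = S α (2*k-1) + α.getD (2*k-1) 0 := by
        have := S_succ α (2*k-1)
        rwa [show 2*k-1+1 = 2*k by omega] at this
      unfold bOf
      rw [if_neg hk0]
      have heq : (Icc (S α (2*k-1)) (S α (2*k))).filter (· ∈ idealOf α u g)
          = Icc (S α (2*k) + 1 - (g ⟨k,hk⟩).2) (S α (2*k)) := by
        ext q
        rw [Finset.mem_filter, Finset.mem_Icc, Finset.mem_Icc]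
        constructor
        · rintro ⟨⟨hq1, hq2⟩, hq3⟩
          have := (desc' hlen hpos hg hk hk1 hq1 hq2).mp hq3
          omega
        · rintro ⟨hq1, hq2⟩
          have hq1' : S α (2*k-1) ≤ q := by have := tb.1; omega
          exact ⟨⟨hq1', hq2⟩, (desc' hlen hpos hg hk hk1 hq1' hq2).mpr (by omega)⟩
      rw [heq, Nat.card_Icc]
      have := tb.1
      omega
  exact Prod.ext ha hb

lemma card_block0 (hlen : α.length = 2*u-1) (hpos : ∀ x ∈ α, 0 < x) (hg : Good α u g)
    (hu : 0 < u) :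
    ((idealOf α u g).filter (· ≤ S α 0)).card = (if 0 < (g ⟨0, hu⟩).1 then 1 else 0) := by
  classical
  have hmem : (0 ∈ idealOf α u g) ↔ 0 < (g ⟨0, hu⟩).1 := by
    have h := asc' (g := g) hlen hpos hg (k := 0) hu (p := 0) (Nat.le_refl 0) (Nat.zero_le _)
    rw [show S α (2*0) = 0 from rfl, Nat.zero_add] at h
    exact h
  have hset : (idealOf α u g).filter (· ≤ S α 0) = (idealOf α u g).filter (· = 0) := by
    apply Finset.filter_congr
    intro x _
    rw [show S α 0 = 0 from rfl]
    simp [Nat.le_zero]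
  rw [hset, Finset.filter_eq']
  by_cases h : 0 ∈ idealOf α u g
  · rw [if_pos h, if_pos (hmem.mp h)]; exact Finset.card_singleton _
  · rw [if_neg h, if_neg (fun hh => h (hmem.mpr hh))]; exact Finset.card_empty

lemma card_blockAsc (hlen : α.length = 2*u-1) (hpos : ∀ x ∈ α, 0 < x) (hg : Good α u g)
    {k : ℕ} (hk : k < u) :
    ((idealOf α u g).filter (fun p => S α (2*k) < p ∧ p ≤ S α (2*k+1))).card
      = (g ⟨k,hk⟩).1 - 1 := by
  have e1 : S α (2*k+1) = S α (2*k) + α.getD (2*k) 0 := S_succ α _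
  have ha : (g ⟨k,hk⟩).1 ≤ α.getD (2*k) 0 + 1 := hg.h1 ⟨k,hk⟩
  have heq : (idealOf α u g).filter (fun p => S α (2*k) < p ∧ p ≤ S α (2*k+1))
      = Ioo (S α (2*k)) (S α (2*k) + (g ⟨k,hk⟩).1) := by
    ext q
    rw [Finset.mem_filter, Finset.mem_Ioo]
    constructor
    · rintro ⟨hq3, hq1, hq2⟩
      exact ⟨hq1, (asc' hlen hpos hg hk (by omega) hq2).mp hq3⟩
    · rintro ⟨hq1, hq2⟩
      have hq2' : q ≤ S α (2*k+1) := by omega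
      exact ⟨(asc' hlen hpos hg hk (by omega) hq2').mpr hq2, hq1, hq2'⟩
  rw [heq, Nat.card_Ioo]
  omega

lemma card_blockDesc (hlen : α.length = 2*u-1) (hpos : ∀ x ∈ α, 0 < x) (hg : Good α u g)
    {k : ℕ} (hk : k < u) (hk1 : 1 ≤ k) :
    ((idealOf α u g).filter (fun p => S α (2*k-1) < p ∧ p ≤ S α (2*k))).card
      = min ((g ⟨k,hk⟩).2) (α.getD (2*k-1) 0) := by
  have e3 : S α (2*k) = S α (2*k-1) + α.getD (2*k-1) 0 := by
    have := S_succ α (2*k-1)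
    rwa [show 2*k-1+1 = 2*k by omega] at this
  have hb : (g ⟨k,hk⟩).2 ≤ α.getD (2*k-1) 0 + 1 := hg.h2 ⟨k,hk⟩
  have heq : (idealOf α u g).filter (fun p => S α (2*k-1) < p ∧ p ≤ S α (2*k))
      = Ioc (S α (2*k) - min ((g ⟨k,hk⟩).2) (α.getD (2*k-1) 0)) (S α (2*k)) := by
    ext q
    rw [Finset.mem_filter, Finset.mem_Ioc]
    constructor
    · rintro ⟨hq3, hq1, hq2⟩
      have := (desc' hlen hpos hg hk hk1 (by omega) hq2).mp hq3
      exact ⟨by omega, hq2⟩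
    · rintro ⟨hq1, hq2⟩
      have hq1' : S α (2*k-1) < q := by omega
      exact ⟨(desc' hlen hpos hg hk hk1 (by omega) hq2).mpr (by omega), hq1', hq2⟩
  rw [heq, Nat.card_Ioc]
  omega

lemma card_idealOf (hlen : α.length = 2*u-1) (hpos : ∀ x ∈ α, 0 < x) (hu : 0 < u)
    (hZ : Z ⊆ range u) (hgT : ∀ i : Fin u, g i ∈ T α Z (i:ℕ)) :
    (idealOf α u g).card = Z.card + ∑ i : Fin u, w Z (i:ℕ) (g i) := by
  classical
  have hg := good_of_T hgT
  obtain ⟨v, rfl⟩ : ∃ v, u = v + 1 := ⟨u - 1, by omega⟩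
  have hbound : ∀ x ∈ idealOf α (v+1) g, x ≤ S α (2*v+1) := by
    intro x hx
    rw [mem_idealOf] at hx
    have hs : S α (2*v+1) = α.sum := by
      rw [show 2*v+1 = 2*(v+1)-1 by omega, ← hlen, S_last]
    omega
  have htel := card_telescope (S α) (fun a b hab => S_le α hab) (2*v+1) _ hbound
  rw [htel, sum_pair]
  -- region ≥ 1 blocks
  have key : ∀ i : Fin v,
      ((idealOf α (v+1) g).filter (fun p => S α (2*(i:ℕ)+1) < p ∧ p ≤ S α (2*(i:ℕ)+1+1))).card
      + ((idealOf α (v+1) g).filter (fun p => S α (2*(i:ℕ)+2) < p ∧ p ≤ S α (2*(i:ℕ)+2+1))).card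
      = ((if ((i:ℕ)+1) ∈ Z then 1 else 0) + w Z ((i:ℕ)+1) (g i.succ)) := by
    intro i
    have hiv : (i:ℕ) < v := i.isLt
    have hk : (i:ℕ)+1 < v+1 := by omega
    have hd := card_blockDesc hlen hpos hg (k := (i:ℕ)+1) hk (by omega)
    have ha := card_blockAsc hlen hpos hg (k := (i:ℕ)+1) hk
    rw [show 2*((i:ℕ)+1)-1 = 2*(i:ℕ)+1 by omega,
        show 2*((i:ℕ)+1) = 2*(i:ℕ)+1+1 by omega] at hd
    rw [show 2*((i:ℕ)+1) = 2*(i:ℕ)+2 by omega] at ha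
    rw [show (2*(i:ℕ)+2)+1 = 2*(i:ℕ)+1+1+1 by omega] at ha
    rw [show (2*(i:ℕ)+1+1 : ℕ) = 2*(i:ℕ)+2 by omega] at hd ha ⊢
    rw [hd, ha]
    have hgs : g i.succ = g ⟨(i:ℕ)+1, hk⟩ := rfl
    rw [hgs]
    obtain ⟨t1, t2, t3, -⟩ :=
      T_facts (show g ⟨(i:ℕ)+1, hk⟩ ∈ T α Z ((i:ℕ)+1) from hgT _)
    have t3' := t3 (by omega)
    rw [show 2*((i:ℕ)+1) = 2*(i:ℕ)+2 by omega] at t1 t2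
    rw [show 2*((i:ℕ)+1)-1 = 2*(i:ℕ)+1 by omega,
        show (i:ℕ)+1-1 = (i:ℕ) by omega] at t3'
    have hdpos : 0 < α.getD (2*(i:ℕ)+1) 0 := getD_pos α hpos (by omega)
    have hepos : 0 < α.getD (2*(i:ℕ)+2) 0 := getD_pos α hpos (by omega)
    unfold w
    rw [if_neg (show ¬ ((i:ℕ)+1 = 0) by omega), show (i:ℕ)+1-1 = (i:ℕ) by omega]
    obtain ⟨t4, t5, t6⟩ := t3'
    by_cases hz1 : (i:ℕ) ∈ Z <;> by_cases hz2 : ((i:ℕ)+1) ∈ Z <;>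
      simp only [hz1, hz2, if_true, if_false] <;>
      [skip; skip; skip; skip]
    · have f1 := t5.mpr hz1
      have f2 := t2.mpr hz2
      split_ifs <;> omega
    · have f1 := t5.mpr hz1
      have f2 : (g ⟨(i:ℕ)+1, hk⟩).1 ≠ α.getD (2*(i:ℕ)+2) 0 + 1 := fun h => hz2 (t2.mp h)
      split_ifs <;> omega
    · have f1 : (g ⟨(i:ℕ)+1, hk⟩).2 ≠ α.getD (2*(i:ℕ)+1) 0 + 1 := fun h => hz1 (t5.mp h)
      have f2 := t2.mpr hz2
      split_ifs <;> omega
    · have f1 : (g ⟨(i:ℕ)+1, hk⟩).2 ≠ α.getD (2*(i:ℕ)+1) 0 + 1 := fun h => hz1 (t5.mp h)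
      have f2 : (g ⟨(i:ℕ)+1, hk⟩).1 ≠ α.getD (2*(i:ℕ)+2) 0 + 1 := fun h => hz2 (t2.mp h)
      split_ifs <;> omega
  -- region 0
  have key0 :
      ((idealOf α (v+1) g).filter (· ≤ S α 0)).card
      + ((idealOf α (v+1) g).filter (fun p => S α 0 < p ∧ p ≤ S α (0+1))).card
      = (if 0 ∈ Z then 1 else 0) + w Z 0 (g 0) := by
    have hb0 := card_block0 hlen hpos hg (Nat.succ_pos v)
    have ha := card_blockAsc hlen hpos hg (k := 0) (Nat.succ_pos v)
    rw [show (2*0 : ℕ) = 0 by omega] at ha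
    rw [hb0, ha]
    have hgs : g 0 = g ⟨0, Nat.succ_pos v⟩ := rfl
    rw [hgs]
    obtain ⟨t1, t2, -, -⟩ :=
      T_facts (show g ⟨0, Nat.succ_pos v⟩ ∈ T α Z 0 from hgT _)
    rw [show (2*0 : ℕ) = 0 by omega] at t1 t2
    unfold w
    rw [if_pos rfl]
    by_cases hz : (0:ℕ) ∈ Z
    · have f2 := t2.mpr hz
      simp only [hz, if_true]
      split_ifs <;> omega
    · have f2 : (g ⟨0, Nat.succ_pos v⟩).1 ≠ α.getD 0 0 + 1 := fun h => hz (t2.mp h)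
      simp only [hz, if_false]
      split_ifs <;> omega
  -- assemble
  have hZcard : Z.card = ∑ i ∈ range (v+1), (if i ∈ Z then 1 else 0) := by
    rw [Finset.sum_ite_mem, Finset.inter_eq_right.mpr hZ, Finset.card_eq_sum_ones]
  rw [hZcard, Fin.sum_univ_succ, Finset.sum_range_succ']
  have hsum1 : ∑ i ∈ range v, (if i+1 ∈ Z then 1 else 0)
      = ∑ i : Fin v, (if ((i:ℕ)+1) ∈ Z then 1 else 0) :=
    (Fin.sum_univ_eq_sum_range (fun j => if j+1 ∈ Z then 1 else 0) v).symm
  have hsum2 : ∑ j ∈ range v,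
      (((idealOf α (v+1) g).filter (fun p => S α (2*j+1) < p ∧ p ≤ S α (2*j+1+1))).card
      + ((idealOf α (v+1) g).filter (fun p => S α (2*j+2) < p ∧ p ≤ S α (2*j+2+1))).card)
      = ∑ i : Fin v,
      (((idealOf α (v+1) g).filter (fun p => S α (2*(i:ℕ)+1) < p ∧ p ≤ S α (2*(i:ℕ)+1+1))).card
      + ((idealOf α (v+1) g).filter (fun p => S α (2*(i:ℕ)+2) < p ∧ p ≤ S α (2*(i:ℕ)+2+1))).card) :=
    (Fin.sum_univ_eq_sum_range _ v).symm
  have hsum3 : ∑ j ∈ range v,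
      (((idealOf α (v+1) g).filter (fun p => S α (2*j+1) < p ∧ p ≤ S α (2*j+1+1))).card
      + ((idealOf α (v+1) g).filter (fun p => S α (2*j+2) < p ∧ p ≤ S α (2*j+2+1))).card)
      = ∑ i : Fin v, ((if ((i:ℕ)+1) ∈ Z then 1 else 0) + w Z ((i:ℕ)+1) (g i.succ)) := by
    rw [hsum2]
    exact Finset.sum_congr rfl (fun i _ => key i)
  rw [hsum3, hsum1]
  simp only [Fin.val_succ, Fin.val_zero]
  rw [Finset.sum_add_distrib]
  omega

end Ideals

/-! ### polynomial factor evaluations -/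

open Polynomial in
lemma sum_Icc_pow (m : ℕ) : ∑ a ∈ Icc 1 m, (X:Polynomial ℕ)^(a-1) = qInt m := by
  unfold qInt
  exact Finset.sum_nbij' (fun a => a - 1) (fun a => a + 1)
    (fun a ha => by simp only [Finset.mem_range, Finset.mem_Icc] at *; omega)
    (fun a ha => by simp only [Finset.mem_range, Finset.mem_Icc] at *; omega)
    (fun a ha => by simp only [Finset.mem_Icc] at ha; show a - 1 + 1 = a; omega)
    (fun a _ => by show a + 1 - 1 = a; omega)
    (fun a _ => rfl)

open Polynomial in
lemma factor0 (α : List ℕ) (Z : Finset ℕ) :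
    (if 0 ∈ Z then (X : Polynomial ℕ) ^ (α.getD 0 0) else qInt (α.getD 0 0 + 1))
      = ∑ p ∈ T α Z 0, (X:Polynomial ℕ) ^ w Z 0 p := by
  unfold T
  rw [if_pos rfl]
  by_cases hz : 0 ∈ Z
  · rw [if_pos hz, if_pos hz, Finset.sum_singleton]
    have hw : w Z 0 (α.getD 0 0 + 1, 0) = α.getD 0 0 := by
      unfold w
      rw [if_pos rfl]
      dsimp only
      simp only [hz, if_true]
      omega
    rw [hw]
  · rw [if_neg hz, if_neg hz, Finset.sum_product]
    simp only [Finset.sum_singleton]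
    unfold qInt
    apply Finset.sum_congr rfl
    intro a _
    have hw : w Z 0 (a, 0) = a := by
      unfold w
      rw [if_pos rfl]
      dsimp only
      simp only [hz, if_false]
      omega
    rw [hw]

open Polynomial in
lemma factori (α : List ℕ) (Z : Finset ℕ) {i : ℕ} (hi : i ≠ 0) :
    (if i - 1 ∈ Z ∧ i ∈ Z then
        (X:Polynomial ℕ) ^ (α.getD (2 * i - 1) 0 + α.getD (2 * i) 0 - 1)
      else if i - 1 ∈ Z then
        X ^ (α.getD (2 * i - 1) 0) * qInt (α.getD (2 * i) 0)
      else if i ∈ Z then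
        X ^ (α.getD (2 * i) 0) * qInt (α.getD (2 * i - 1) 0)
      else 1 + X * qInt (α.getD (2 * i - 1) 0) * qInt (α.getD (2 * i) 0))
    = ∑ p ∈ T α Z i, (X:Polynomial ℕ) ^ w Z i p := by
  have hwval : ∀ a b : ℕ, w Z i (a, b) = a + b -
      ((if 0 < a then 1 else 0) + (if i - 1 ∈ Z then 1 else 0) + (if i ∈ Z then 1 else 0)) := by
    intro a b
    unfold w
    rw [if_neg hi]
  unfold T
  rw [if_neg hi]
  by_cases hz1 : i - 1 ∈ Z <;> by_cases hz2 : i ∈ Z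
  · simp only [hz1, hz2, if_true, and_self]
    rw [Finset.sum_singleton, hwval]
    simp only [hz1, hz2, if_true]
    rw [if_pos (by omega)]
    congr 1
    omega
  · simp only [hz1, hz2, if_true, if_false, and_false]
    rw [Finset.sum_product]
    simp only [Finset.sum_singleton]
    have hterm : ∀ a ∈ Icc 1 (α.getD (2*i) 0),
        (X:Polynomial ℕ) ^ (w Z i (a, α.getD (2*i-1) 0 + 1))
          = X ^ (α.getD (2*i-1) 0) * X ^ (a-1) := by
      intro a ha
      rw [Finset.mem_Icc] at ha
      rw [hwval]
      simp only [hz1, hz2, if_true, if_false]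
      rw [if_pos (by omega), ← pow_add]
      congr 1
      omega
    rw [Finset.sum_congr rfl hterm, ← Finset.mul_sum, sum_Icc_pow]
  · simp only [hz1, hz2, if_true, if_false, false_and]
    rw [Finset.sum_product, Finset.sum_singleton]
    have hterm : ∀ b ∈ Icc 1 (α.getD (2*i-1) 0),
        (X:Polynomial ℕ) ^ (w Z i (α.getD (2*i) 0 + 1, b))
          = X ^ (α.getD (2*i) 0) * X ^ (b-1) := by
      intro b hb
      rw [Finset.mem_Icc] at hb
      rw [hwval]
      simp only [hz1, hz2, if_true, if_false]
      rw [if_pos (by omega), ← pow_add]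
      congr 1
      omega
    rw [Finset.sum_congr rfl hterm, ← Finset.mul_sum, sum_Icc_pow]
  · simp only [hz1, hz2, if_false, false_and, and_false]
    rw [Finset.sum_insert (by simp)]
    have h00 : (X:Polynomial ℕ) ^ (w Z i ((0:ℕ),(0:ℕ))) = 1 := by
      rw [hwval]
      simp [hz1, hz2]
    rw [h00, Finset.sum_product]
    have hterm : ∀ a ∈ Icc 1 (α.getD (2*i) 0), ∀ b ∈ Icc 1 (α.getD (2*i-1) 0),
        (X:Polynomial ℕ) ^ (w Z i (a, b)) = X * X ^ (a-1) * X ^ (b-1) := by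
      intro a ha b hb
      rw [Finset.mem_Icc] at ha hb
      rw [hwval]
      simp only [hz1, hz2, if_false]
      rw [if_pos (by omega), ← pow_succ', ← pow_add]
      congr 1
      omega
    have h1 : ∀ a ∈ Icc 1 (α.getD (2*i) 0), ∑ b ∈ Icc 1 (α.getD (2*i-1) 0),
        (X:Polynomial ℕ) ^ (w Z i (a, b)) = X * X ^ (a-1) * qInt (α.getD (2*i-1) 0) := by
      intro a ha
      rw [Finset.sum_congr rfl (fun b hb => hterm a ha b hb), ← Finset.mul_sum, sum_Icc_pow]
    rw [Finset.sum_congr rfl h1, ← Finset.sum_mul, ← Finset.mul_sum, sum_Icc_pow]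
    ring

/-! ### from rpoly to a sum over ideals -/

noncomputable def idealsF (α : List ℕ) : Finset (Finset (Fin (α.sum+1))) :=
  @Finset.filter _ (fun I => IsFenceIdeal α I) (Classical.decPred _) Finset.univ

noncomputable def idealsN (α : List ℕ) : Finset (Finset ℕ) :=
  @Finset.filter _ (fun J => ∀ p q : ℕ, fenceLe α p q → q ∈ J → p ∈ J) (Classical.decPred _)
    ((range (α.sum+1)).powerset)

lemma mem_idealsN {α : List ℕ} {J : Finset ℕ} :
    J ∈ idealsN α ↔ J ⊆ range (α.sum+1) ∧ ∀ p q : ℕ, fenceLe α p q → q ∈ J → p ∈ J := by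
  classical
  unfold idealsN
  rw [Finset.mem_filter, Finset.mem_powerset]

open Polynomial in
lemma rpoly_eq_sum (α : List ℕ) :
    rpoly α = ∑ I ∈ idealsF α, (X:Polynomial ℕ) ^ I.card := by
  classical
  have h1 : ∀ k, fenceRk α k = ((idealsF α).filter (fun I => I.card = k)).card := by
    intro k
    unfold fenceRk idealsF
    rw [Nat.card_eq_fintype_card, Fintype.card_subtype]
    congr 1
    ext I
    simp [Finset.mem_filter, and_assoc]
  have h2 : ∑ I ∈ idealsF α, (X:Polynomial ℕ) ^ I.card
      = ∑ k ∈ Finset.range (α.sum+2), ∑ I ∈ (idealsF α).filter (fun I => I.card = k),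
          (X:Polynomial ℕ) ^ I.card := by
    rw [Finset.sum_fiberwise_of_maps_to]
    intro I _
    rw [Finset.mem_range]
    have h3 := Finset.card_le_univ I
    have h4 : (Finset.univ : Finset (Fin (α.sum+1))).card = α.sum+1 := by simp
    have h5 : Fintype.card (Fin (α.sum+1)) = α.sum+1 := Fintype.card_fin _
    omega
  rw [h2]
  unfold rpoly
  apply Finset.sum_congr rfl
  intro k _
  rw [h1 k]
  have h6 : ∑ I ∈ (idealsF α).filter (fun I => I.card = k), (X:Polynomial ℕ) ^ I.card
      = ∑ _I ∈ (idealsF α).filter (fun I => I.card = k), (X:Polynomial ℕ) ^ k :=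
    Finset.sum_congr rfl (fun I hI => by rw [(Finset.mem_filter.mp hI).2])
  rw [h6, Finset.sum_const, nsmul_eq_mul]
  congr 1

lemma fenceLe_le (α : List ℕ) {p q : ℕ} (h : fenceLe α p q) (hq : q ≤ α.sum) : p ≤ α.sum := by
  rcases h with rfl | ⟨j, hj, hc⟩
  · exact hq
  · by_cases hpar : j % 2 = 0
    · rw [if_pos hpar] at hc; omega
    · rw [if_neg hpar] at hc
      have h1 : S α (j+1) ≤ α.sum := S_le_sum α _
      have hc3 : p ≤ S α (j+1) := hc.2.2
      omega

open Polynomial in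
lemma sumF_eq_sumN (α : List ℕ) :
    ∑ I ∈ idealsF α, (X:Polynomial ℕ) ^ I.card
      = ∑ J ∈ idealsN α, (X:Polynomial ℕ) ^ J.card := by
  classical
  refine Finset.sum_nbij' (fun I => I.map ⟨Fin.val, Fin.val_injective⟩)
    (fun J => (J.filter (· < α.sum+1)).attachFin (fun m hm => (Finset.mem_filter.mp hm).2))
    ?_ ?_ ?_ ?_ ?_
  · intro I hI
    have hIid : IsFenceIdeal α I := (Finset.mem_filter.mp hI).2
    rw [mem_idealsN]
    constructor
    · intro x hx
      rw [Finset.mem_map] at hx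
      obtain ⟨y, -, rfl⟩ := hx
      rw [Finset.mem_range]
      exact y.isLt
    · intro p q hle hq
      rw [Finset.mem_map] at hq ⊢
      obtain ⟨qF, hqF, hqv⟩ := hq
      have hqv' : (qF : ℕ) = q := hqv
      have hq' : q ≤ α.sum := by have := qF.isLt; omega
      have hp' : p ≤ α.sum := fenceLe_le α hle hq'
      refine ⟨⟨p, by omega⟩, hIid ⟨p, by omega⟩ qF ?_ hqF, rfl⟩
      show fenceLe α p (qF : ℕ)
      rw [hqv']
      exact hle
  · intro J hJ
    obtain ⟨hJsub, hJcl⟩ := mem_idealsN.mp hJ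
    unfold idealsF
    rw [Finset.mem_filter]
    refine ⟨Finset.mem_univ _, ?_⟩
    intro p q hle hq
    rw [Finset.mem_attachFin, Finset.mem_filter] at hq ⊢
    exact ⟨hJcl ↑p ↑q hle hq.1, p.isLt⟩
  · intro I _
    ext x
    rw [Finset.mem_attachFin, Finset.mem_filter, Finset.mem_map]
    constructor
    · rintro ⟨⟨y, hy, hxy⟩, -⟩
      have : y = x := Fin.val_injective hxy
      rwa [← this]
    · intro hx
      exact ⟨⟨x, hx, rfl⟩, x.isLt⟩
  · intro J hJ
    have hsub : J ⊆ range (α.sum+1) := (mem_idealsN.mp hJ).1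
    ext x
    rw [Finset.mem_map]
    constructor
    · rintro ⟨y, hy, rfl⟩
      rw [Finset.mem_attachFin, Finset.mem_filter] at hy
      exact hy.1
    · intro hx
      have hxlt : x < α.sum+1 := by have := hsub hx; rwa [Finset.mem_range] at this
      exact ⟨⟨x, hxlt⟩, by rw [Finset.mem_attachFin, Finset.mem_filter]; exact ⟨hx, hxlt⟩, rfl⟩
  · intro I _
    rw [Finset.card_map]

open Polynomial in
lemma sumN_eq_sigma {α : List ℕ} {u : ℕ} (hlen : α.length = 2*u-1)
    (hpos : ∀ x ∈ α, 0 < x) (hu : 0 < u) :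
    ∑ J ∈ idealsN α, (X:Polynomial ℕ) ^ J.card
      = ∑ x ∈ ((range u).powerset.sigma
          (fun Z => Fintype.piFinset (fun i : Fin u => T α Z (i:ℕ)))),
          (X:Polynomial ℕ) ^ (x.1.card + ∑ i : Fin u, w x.1 (i:ℕ) (x.2 i)) := by
  classical
  refine Finset.sum_nbij'
    (fun J => (⟨ZOf α u J, gOf α u J⟩ : Σ _ : Finset ℕ, (Fin u → ℕ × ℕ)))
    (fun x => idealOf α u x.2) ?_ ?_ ?_ ?_ ?_
  · intro J hJ
    obtain ⟨hJsub, hJcl⟩ := mem_idealsN.mp hJ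
    rw [Finset.mem_sigma]
    constructor
    · rw [Finset.mem_powerset]; exact Finset.filter_subset _ _
    · rw [Fintype.mem_piFinset]; exact fun i => gOf_mem_T hlen hJcl i
  · intro x hx
    rw [Finset.mem_sigma] at hx
    have hgT := Fintype.mem_piFinset.mp hx.2
    rw [mem_idealsN]
    exact ⟨Finset.filter_subset _ _, idealOf_closed hlen hpos hu (good_of_T hgT)⟩
  · intro J hJ
    obtain ⟨hJsub, hJcl⟩ := mem_idealsN.mp hJ
    exact idealOf_gOf hlen hu hJsub hJcl
  · intro x hx
    obtain ⟨Z, g⟩ := x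
    rw [Finset.mem_sigma] at hx
    have hZ := Finset.mem_powerset.mp hx.1
    have hgT := Fintype.mem_piFinset.mp hx.2
    have h1 := ZOf_idealOf hlen hpos hZ hgT
    have h2 := gOf_idealOf hlen hpos hgT
    exact Sigma.ext h1 (heq_of_eq h2)
  · intro J hJ
    obtain ⟨hJsub, hJcl⟩ := mem_idealsN.mp hJ
    congr 1
    conv_lhs => rw [← idealOf_gOf hlen hu hJsub hJcl]
    exact card_idealOf hlen hpos hu (Finset.filter_subset _ _)
      (fun i => gOf_mem_T hlen hJcl i)

end Claussen

open Claussen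

/-- Claussen's explicit formula for `r(q;α)` when `α` has an odd number
`2u - 1` of parts.  Subsets `Z` of the set of maxima `{z₁,…,z_u}` are encoded
as subsets of `Finset.range u`, with `z_i ↔ i - 1`; the part `α_j` (1-based)
is `α.getD (j-1) 0`. -/
theorem rpoly_explicit_formula (u : ℕ) (hu : 0 < u) (α : List ℕ)
    (hlen : α.length = 2 * u - 1) (hpos : ∀ x ∈ α, 0 < x) :
    rpoly α = ∑ Z ∈ (Finset.range u).powerset, Polynomial.X ^ Z.card *
      ∏ i ∈ Finset.range u,
        (if i = 0 then
          (if 0 ∈ Z then (Polynomial.X : Polynomial ℕ) ^ (α.getD 0 0)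
           else qInt (α.getD 0 0 + 1))
         else
          (if i - 1 ∈ Z ∧ i ∈ Z then
            Polynomial.X ^ (α.getD (2 * i - 1) 0 + α.getD (2 * i) 0 - 1)
           else if i - 1 ∈ Z then
            Polynomial.X ^ (α.getD (2 * i - 1) 0) * qInt (α.getD (2 * i) 0)
           else if i ∈ Z then
            Polynomial.X ^ (α.getD (2 * i) 0) * qInt (α.getD (2 * i - 1) 0)
           else
            1 + Polynomial.X * qInt (α.getD (2 * i - 1) 0) * qInt (α.getD (2 * i) 0))) := by
  classical
  rw [rpoly_eq_sum, sumF_eq_sumN, sumN_eq_sigma hlen hpos hu, Finset.sum_sigma]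
  apply Finset.sum_congr rfl
  intro Z _
  have hprod : (∏ i ∈ Finset.range u,
        (if i = 0 then
          (if 0 ∈ Z then (Polynomial.X : Polynomial ℕ) ^ (α.getD 0 0)
           else qInt (α.getD 0 0 + 1))
         else
          (if i - 1 ∈ Z ∧ i ∈ Z then
            Polynomial.X ^ (α.getD (2 * i - 1) 0 + α.getD (2 * i) 0 - 1)
           else if i - 1 ∈ Z then
            Polynomial.X ^ (α.getD (2 * i - 1) 0) * qInt (α.getD (2 * i) 0)
           else if i ∈ Z then
            Polynomial.X ^ (α.getD (2 * i) 0) * qInt (α.getD (2 * i - 1) 0)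
           else
            1 + Polynomial.X * qInt (α.getD (2 * i - 1) 0) * qInt (α.getD (2 * i) 0))))
      = ∑ g ∈ Fintype.piFinset (fun i : Fin u => T α Z (i:ℕ)),
          ∏ i : Fin u, (X:Polynomial ℕ) ^ (w Z (i:ℕ) (g i)) := by
    rw [← Fin.prod_univ_eq_prod_range,
      ← Finset.prod_univ_sum (fun i : Fin u => T α Z (i:ℕ))
        (fun i p => (X:Polynomial ℕ) ^ (w Z (i:ℕ) p))]
    apply Finset.prod_congr rfl
    intro i _
    by_cases h0 : (i:ℕ) = 0
    · rw [h0, if_pos rfl]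
      exact factor0 α Z
    · rw [if_neg h0]
      exact factori α Z h0
  rw [hprod, Finset.mul_sum]
  apply Finset.sum_congr rfl
  intro g _
  rw [Finset.prod_pow_eq_pow_sum, ← pow_add]
end
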